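/- arXiv:2207.11806 — 4 statements merged into one kernel-verified Lean document; each statement's English description precedes it below -/
import Mathlib

section
/- Let p be an odd prime and let Γ_p : ℤ_p → ℤ_p be Morita's p-adic gamma function, i.e. the unique continuous function satisfying Γ_p(n) = (−1)^n · ∏_{1 ≤ k < n, p ∤ k} k for every positive integer n. Then for every z ∈ ℤ_p with |z − 1| ≤ 1/p, there exists a continuous function g : ℤ_p → ℚ_p such that g(k) = z^k / Γ_p(k+1) for every nonnegative integer k. (Note that |Γ_p(s)| = 1 for all s ∈ ℤ_p, so the quotient is well defined.) -/
/-!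
`Γ_p` takes unit values on the positive integers, which are dense in `ℤ_p`, and the units of `ℤ_p`
form a closed set, so `Γ_p` never vanishes. Since `|z - 1| < 1`, the continuous additive
character `κ` of `ℤ_p` with `κ 1 = z` (the Mahler series `∑ (z - 1)^n (x choose n)`) interpolates
`k ↦ z^k`, and `κ x / Γ_p (x + 1)` is the required extension.
-/

namespace PadicInt

variable {p : ℕ} [Fact p.Prime]

lemma isClosed_setOf_isUnit : IsClosed {x : ℤ_[p] | IsUnit x} := by
  simp only [isUnit_iff]
  exact isClosed_eq continuous_norm continuous_const

lemma isUnit_prod_natCast {s : Finset ℕ} (hs : ∀ k ∈ s, ¬ p ∣ k) :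
    IsUnit (∏ k ∈ s, (k : ℤ_[p])) :=
  IsUnit.prod_iff.mpr fun k hk ↦ isUnit_iff.mpr <| norm_natCast_eq_one_iff.mpr <|
    (Nat.Prime.coprime_iff_not_dvd Fact.out).mpr (hs k hk)

lemma forall_of_forall_natCast_add_one {P : ℤ_[p] → Prop} (hP : IsClosed {x | P x})
    (h : ∀ n : ℕ, P (n + 1)) (x : ℤ_[p]) : P x := by
  have := denseRange_natCast.induction_on (p := fun y ↦ P (y + 1)) (x - 1)
    (hP.preimage (continuous_add_const 1)) h
  rwa [sub_add_cancel] at this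

end PadicInt

theorem morita_gamma_sequence_extends_general (p : ℕ) [Fact p.Prime]
    (Γ : ℤ_[p] → ℤ_[p]) (hΓcont : Continuous Γ)
    (hΓ : ∀ n : ℕ, 0 < n → Γ (n : ℤ_[p]) =
      (-1) ^ n * ∏ k ∈ (Finset.Ico 1 n).filter (fun k => ¬ p ∣ k), (k : ℤ_[p]))
    (z : ℤ_[p]) (hz : ‖z - 1‖ ≤ 1 / p) :
    ∃ g : ℤ_[p] → ℚ_[p], Continuous g ∧
      ∀ k : ℕ, g (k : ℤ_[p]) = ((z : ℚ_[p]) ^ k) / ((Γ ((k : ℤ_[p]) + 1) : ℚ_[p])) := by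
  have hΓunit : ∀ x, IsUnit (Γ x) := by
    refine PadicInt.forall_of_forall_natCast_add_one
      (PadicInt.isClosed_setOf_isUnit.preimage hΓcont) fun n ↦ ?_
    rw [← Nat.cast_add_one, hΓ _ n.succ_pos]
    exact ((isUnit_one.neg).pow _).mul <|
      PadicInt.isUnit_prod_natCast fun k hk ↦ (Finset.mem_filter.mp hk).2
  have hp : p.Prime := Fact.out
  have hz_lt : ‖z - 1‖ < 1 :=
    hz.trans_lt <| (div_lt_one (by exact_mod_cast hp.pos)).mpr (by exact_mod_cast hp.one_lt)
  let κ := PadicInt.addChar_of_value_at_one (p := p) (z - 1)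
    (tendsto_pow_atTop_nhds_zero_of_norm_lt_one hz_lt)
  refine ⟨fun x ↦ (κ x : ℚ_[p]) / (Γ (x + 1) : ℚ_[p]), ?_, fun k ↦ ?_⟩
  · have hκ : Continuous κ := PadicInt.continuous_addChar_of_value_at_one _
    refine .div (continuous_subtype_val.comp hκ)
      (continuous_subtype_val.comp (hΓcont.comp (continuous_add_const 1))) fun x ↦ ?_
    exact PadicInt.coe_ne_zero.mpr (hΓunit _).ne_zero
  · have hκ_nat : κ k = z ^ k := by
      rw [← nsmul_one, AddChar.map_nsmul_eq_pow, PadicInt.addChar_of_value_at_one_def,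
        add_sub_cancel]
    simp only [hκ_nat, PadicInt.coe_pow]

/-- Let `p` be an odd prime and `Γ` Morita's `p`-adic gamma function,
i.e. the (unique) continuous function on `ℤ_[p]` with
`Γ n = (-1)^n * ∏_{1 ≤ k < n, p ∤ k} k` for positive integers `n`.  Then for every
`z ∈ ℤ_[p]` with `|z - 1| ≤ 1/p`, the sequence `k ↦ z^k / Γ(k+1)` extends to a
continuous function `ℤ_[p] → ℚ_[p]`. -/
theorem morita_gamma_sequence_extends (p : ℕ) [Fact p.Prime] (hp : p ≠ 2)
    (Γ : ℤ_[p] → ℤ_[p]) (hΓcont : Continuous Γ)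
    (hΓ : ∀ n : ℕ, 0 < n → Γ (n : ℤ_[p]) =
      (-1) ^ n * ∏ k ∈ (Finset.Ico 1 n).filter (fun k => ¬ p ∣ k), (k : ℤ_[p]))
    (z : ℤ_[p]) (hz : ‖z - 1‖ ≤ 1 / p) :
    ∃ g : ℤ_[p] → ℚ_[p], Continuous g ∧
      ∀ k : ℕ, g (k : ℤ_[p]) = ((z : ℚ_[p]) ^ k) / ((Γ ((k : ℤ_[p]) + 1) : ℚ_[p])) :=
  morita_gamma_sequence_extends_general p Γ hΓcont hΓ z hz
end

section
/- Let p be an odd prime. Define h_p : ℤ_p → ℤ_p by h_p(s) = −s if s is a unit in ℤ_p and h_p(s) = −1 if p divides s. For z ∈ ℤ_p let exp_p(pz) denote the convergent sum Σ_{n ≥ 0} (pz)^n / n! in ℚ_p. Then there exists a unique continuous function Γ : ℤ_p × { z ∈ ℤ_p : |z − 1| ≤ 1/p } → ℚ_p such that: (1) Γ(1, z) = exp_p(pz) for all z with |z − 1| ≤ 1/p, and (2) Γ(n+1, z) = h_p(n)·Γ(n, z) + z^n · exp_p(pz) for every positive integer n and all z with |z − 1| ≤ 1/p. -/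
open scoped Classical

/-- `h_p(s) = -s` if `s` is a unit of `ℤ_p`, and `h_p(s) = -1` if `p ∣ s`. -/
noncomputable def moritaH (p : ℕ) [Fact p.Prime] (s : ℤ_[p]) : ℤ_[p] :=
  if IsUnit s then -s else -1

/-- The `p`-adic exponential `exp_p(pz) = ∑_{n ≥ 0} (pz)^n / n!`, as a sum in `ℚ_[p]`. -/
noncomputable def expp (p : ℕ) [Fact p.Prime] (z : ℤ_[p]) : ℚ_[p] :=
  ∑' n : ℕ, ((p : ℚ_[p]) * (z : ℚ_[p])) ^ n / (n.factorial : ℚ_[p])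

namespace IncGamma

variable (p : ℕ) [Fact p.Prime]

/-- `h` restricted to naturals. -/
noncomputable def hn (j : ℕ) : ℤ_[p] := moritaH p (j : ℤ_[p])

/-- partial products of `hn` starting at `a`, length `l`. -/
noncomputable def Pr (a l : ℕ) : ℤ_[p] := ∏ j ∈ Finset.range l, hn p (a + j)

variable {p}

lemma isUnit_natCast_iff (n : ℕ) : IsUnit (n : ℤ_[p]) ↔ ¬ (p ∣ n) := by
  rw [PadicInt.isUnit_iff]
  have h1 : ‖(n : ℤ_[p])‖ ≤ 1 := PadicInt.norm_le_one _
  have h2 : ‖((n : ℤ) : ℤ_[p])‖ < 1 ↔ (p : ℤ) ∣ (n : ℤ) := PadicInt.norm_int_lt_one_iff_dvd n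
  have e : ((n : ℤ) : ℤ_[p]) = (n : ℤ_[p]) := by push_cast; rfl
  rw [e] at h2
  constructor
  · intro h hd
    have := h2.mpr (Int.natCast_dvd_natCast.mpr hd)
    rw [h] at this; exact lt_irrefl _ this
  · intro h
    rcases lt_or_eq_of_le h1 with h' | h'
    · exact absurd (Int.natCast_dvd_natCast.mp (h2.mp h')) h
    · exact h'

lemma hn_isUnit (j : ℕ) : IsUnit (hn p j) := by
  unfold hn moritaH
  split
  · simpa using ‹IsUnit ((j : ℤ_[p]))›
  · simpa using isUnit_one.neg

lemma hn_cong {M : ℕ} (hM : 1 ≤ M) (j t : ℕ) :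
    (p : ℤ_[p]) ^ M ∣ hn p (j + t * p ^ M) - hn p j := by
  have hpt : p ∣ t * p ^ M :=
    Dvd.dvd.mul_left (dvd_pow_self p (Nat.one_le_iff_ne_zero.mp hM)) t
  have hunit : IsUnit ((j + t * p ^ M : ℕ) : ℤ_[p]) ↔ IsUnit ((j : ℕ) : ℤ_[p]) := by
    rw [isUnit_natCast_iff, isUnit_natCast_iff]
    have hiff : p ∣ j + t * p ^ M ↔ p ∣ j := by
      constructor
      · intro h
        exact (Nat.dvd_add_right hpt).mp (by rwa [Nat.add_comm] at h)
      · intro h; exact Nat.dvd_add h hpt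
    rw [hiff]
  unfold hn moritaH
  by_cases hu : IsUnit ((j : ℕ) : ℤ_[p])
  · rw [if_pos hu, if_pos (hunit.mpr hu)]
    push_cast
    exact ⟨-t, by ring⟩
  · rw [if_neg hu, if_neg (fun h => hu (hunit.mp h))]
    simp

end IncGamma

namespace IncGamma

variable {p : ℕ} [Fact p.Prime]

lemma dvd_mul_sub_mul {q a b c d : ℤ_[p]} (h1 : q ∣ a - b) (h2 : q ∣ c - d) :
    q ∣ a * c - b * d := by
  have : a * c - b * d = a * (c - d) + (a - b) * d := by ring
  rw [this]
  exact dvd_add (Dvd.dvd.mul_left h2 a) (Dvd.dvd.mul_right h1 d)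

lemma dvd_prod_sub_prod {ι : Type*} {q : ℤ_[p]} (s : Finset ι) (f g : ι → ℤ_[p])
    (h : ∀ i ∈ s, q ∣ f i - g i) : q ∣ (∏ i ∈ s, f i) - ∏ i ∈ s, g i := by
  induction s using Finset.cons_induction with
  | empty => simp
  | cons a s ha ih =>
    rw [Finset.prod_cons, Finset.prod_cons]
    exact dvd_mul_sub_mul (h a (Finset.mem_cons_self a s))
      (ih fun i hi => h i (Finset.mem_cons_of_mem hi))

lemma Pr_succ (a l : ℕ) : Pr p a (l + 1) = Pr p a l * hn p (a + l) :=
  Finset.prod_range_succ _ _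

lemma Pr_add (a l1 l2 : ℕ) : Pr p a (l1 + l2) = Pr p a l1 * Pr p (a + l1) l2 := by
  unfold Pr
  rw [Finset.prod_range_add]
  congr 1
  refine Finset.prod_congr rfl fun j _ => ?_
  congr 1
  omega

lemma Pr_succ' (a l : ℕ) : Pr p a (l + 1) = hn p a * Pr p (a + 1) l := by
  rw [show l + 1 = 1 + l from by omega, Pr_add]
  congr 1
  unfold Pr
  simp

lemma Pr_isUnit (a l : ℕ) : IsUnit (Pr p a l) := by
  unfold Pr
  exact Finset.prod_induction _ _ (fun _ _ => IsUnit.mul) isUnit_one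
    (fun j _ => hn_isUnit _)

lemma Pr_cong_start {M : ℕ} (hM : 1 ≤ M) (a t l : ℕ) :
    (p : ℤ_[p]) ^ M ∣ Pr p (a + t * p ^ M) l - Pr p a l := by
  refine dvd_prod_sub_prod _ _ _ fun j _ => ?_
  have : a + t * p ^ M + j = (a + j) + t * p ^ M := by omega
  rw [this]
  exact hn_cong hM (a + j) t

lemma Pr_shift {M : ℕ} (hM : 1 ≤ M) (a : ℕ) :
    (p : ℤ_[p]) ^ M ∣ Pr p a (p ^ M) - Pr p 0 (p ^ M) := by
  induction a with
  | zero => simp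
  | succ a ih =>
    have key : Pr p (a + 1) (p ^ M) * hn p a = Pr p a (p ^ M) * hn p (a + p ^ M) := by
      rw [mul_comm, ← Pr_succ', ← Pr_succ]
    have h1 : (p : ℤ_[p]) ^ M ∣ (Pr p (a + 1) (p ^ M) - Pr p a (p ^ M)) * hn p a := by
      have : (Pr p (a + 1) (p ^ M) - Pr p a (p ^ M)) * hn p a
          = Pr p a (p ^ M) * (hn p (a + 1 * p ^ M) - hn p a) := by
        rw [one_mul]
        rw [sub_mul, key]; ring
      rw [this]
      exact Dvd.dvd.mul_left (hn_cong hM a 1) _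
    have h2 : (p : ℤ_[p]) ^ M ∣ Pr p (a + 1) (p ^ M) - Pr p a (p ^ M) :=
      ((hn_isUnit (p := p) a).dvd_mul_right).mp h1
    have := dvd_add h2 ih
    rwa [sub_add_sub_cancel] at this

lemma Pr_mul (s b L : ℕ) : Pr p s (b * L) = ∏ a ∈ Finset.range b, Pr p (s + a * L) L := by
  induction b with
  | zero => simp [Pr]
  | succ b ih =>
    rw [Nat.succ_mul, Pr_add, ih, Finset.prod_range_succ]

lemma Pr_block_cong {M : ℕ} (hM : 1 ≤ M) (s b : ℕ) :
    (p : ℤ_[p]) ^ M ∣ Pr p s (b * p ^ M) - (Pr p 0 (p ^ M)) ^ b := by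
  have hconst : (Pr p 0 (p ^ M)) ^ b = ∏ _a ∈ Finset.range b, Pr p 0 (p ^ M) := by
    rw [Finset.prod_const, Finset.card_range]
  rw [Pr_mul, hconst]
  refine dvd_prod_sub_prod _ _ _ fun a _ => ?_
  exact Pr_shift hM (s + a * p ^ M)

lemma dvd_geom_sum {x : ℤ_[p]} (h : (p : ℤ_[p]) ∣ x - 1) (l : ℕ) :
    (p : ℤ_[p]) ∣ (∑ a ∈ Finset.range l, x ^ a) - l := by
  have : (∑ a ∈ Finset.range l, x ^ a) - l = ∑ a ∈ Finset.range l, (x ^ a - 1) := by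
    rw [Finset.sum_sub_distrib]
    simp
  rw [this]
  refine Finset.dvd_sum fun a _ => ?_
  have : x - 1 ∣ x ^ a - 1 := by
    simpa using sub_dvd_pow_sub_pow x 1 a
  exact h.trans this

lemma dvd_geom_sum_p {x : ℤ_[p]} (h : (p : ℤ_[p]) ∣ x - 1) :
    (p : ℤ_[p]) ∣ ∑ a ∈ Finset.range p, x ^ a := by
  have := dvd_geom_sum h p
  have h2 : (p : ℤ_[p]) ∣ ((p : ℕ) : ℤ_[p]) := dvd_refl _
  have := dvd_add this h2
  simpa using this

lemma pow_p_lift {k : ℕ} (hk : 1 ≤ k) {x : ℤ_[p]} (h : (p : ℤ_[p]) ^ k ∣ x - 1) :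
    (p : ℤ_[p]) ^ (k + 1) ∣ x ^ p - 1 := by
  have hx1 : (p : ℤ_[p]) ∣ x - 1 := (dvd_pow_self _ (Nat.one_le_iff_ne_zero.mp hk)).trans h
  have hgeom : (∑ a ∈ Finset.range p, x ^ a) * (x - 1) = x ^ p - 1 := by
    simpa using geom_sum_mul x p
  rw [← hgeom, pow_succ, mul_comm ((p : ℤ_[p]) ^ k) _]
  exact mul_dvd_mul (dvd_geom_sum_p hx1) h

lemma nat_dvd_cast {a b : ℕ} (h : a ∣ b) : (a : ℤ_[p]) ∣ (b : ℤ_[p]) := by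
  obtain ⟨c, rfl⟩ := h
  push_cast
  exact ⟨c, rfl⟩

lemma wilson_base (hp : p ≠ 2) : (p : ℤ_[p]) ∣ Pr p 0 p - 1 := by
  have hodd : Odd p := (Fact.out : p.Prime).odd_of_ne_two hp
  have hp1 : p = (p - 1) + 1 := by
    have := (Fact.out : p.Prime).one_lt; omega
  have hval : Pr p 0 p = -(((p - 1).factorial : ℕ) : ℤ_[p]) := by
    unfold Pr
    have hrange : Finset.range p = Finset.range ((p - 1) + 1) := by rw [← hp1]
    rw [hrange, Finset.prod_range_succ']
    have h0 : hn p (0 + 0) = -1 := by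
      have hnu : ¬ IsUnit (((0 + 0 : ℕ)) : ℤ_[p]) := by
        rw [isUnit_natCast_iff]; simp
      unfold hn moritaH
      rw [if_neg hnu]
    rw [h0]
    have hterm : ∀ j ∈ Finset.range (p - 1), hn p (0 + (j + 1)) = -(((j + 1) : ℕ) : ℤ_[p]) := by
      intro j hj
      simp only [Finset.mem_range] at hj
      have hu : IsUnit (((0 + (j + 1) : ℕ)) : ℤ_[p]) := by
        rw [isUnit_natCast_iff]
        intro hdvd
        have := Nat.le_of_dvd (by omega) hdvd
        omega
      unfold hn moritaH
      rw [if_pos hu]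
      norm_num
    rw [Finset.prod_congr rfl hterm]
    have hneg : ∀ (s : Finset ℕ) (f : ℕ → ℤ_[p]),
        ∏ j ∈ s, -f j = (-1) ^ s.card * ∏ j ∈ s, f j := by
      intro s f
      rw [← Finset.prod_const, ← Finset.prod_mul_distrib]
      exact Finset.prod_congr rfl fun j _ => by ring
    rw [hneg, Finset.card_range]
    have heven : Even (p - 1) := by
      rcases hodd with ⟨k, hk⟩
      exact ⟨k, by omega⟩
    rw [heven.neg_one_pow, one_mul]
    have : ∏ j ∈ Finset.range (p - 1), (((j + 1) : ℕ) : ℤ_[p])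
        = (((p - 1).factorial : ℕ) : ℤ_[p]) := by
      rw [← Nat.cast_prod]
      congr 1
      exact Finset.prod_range_add_one_eq_factorial _
    rw [this]
    ring
  rw [hval]
  have hwil : p ∣ (p - 1).factorial + 1 := by
    have := ZMod.wilsons_lemma p
    have h0 : (((p - 1).factorial + 1 : ℕ) : ZMod p) = 0 := by
      push_cast
      rw [this]
      ring
    exact (ZMod.natCast_eq_zero_iff _ _).mp h0
  have := nat_dvd_cast (p := p) hwil
  push_cast at this
  have heq : -(((p - 1).factorial : ℕ) : ℤ_[p]) - 1
      = -((((p - 1).factorial : ℕ) : ℤ_[p]) + 1) := by ring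
  rw [heq]
  exact (dvd_neg).mpr (by exact_mod_cast this)

lemma wilsonG (hp : p ≠ 2) (M : ℕ) (hM : 1 ≤ M) :
    (p : ℤ_[p]) ∣ Pr p 0 (p ^ M) - 1 ∧ (p : ℤ_[p]) ^ (M - 1) ∣ Pr p 0 (p ^ M) - 1 := by
  induction M with
  | zero => omega
  | succ M ih =>
    rcases Nat.eq_or_lt_of_le hM with h1 | h1
    · -- M + 1 = 1
      have hM0 : M = 0 := by omega
      subst hM0
      refine ⟨by simpa using wilson_base hp, by simp⟩
    · have hM1 : 1 ≤ M := by omega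
      obtain ⟨ihp, ihpow⟩ := ih hM1
      set X := Pr p 0 (p ^ M) with hX
      have hsplit : (p : ℤ_[p]) ^ M ∣ Pr p 0 (p ^ (M + 1)) - X ^ p := by
        have : p ^ (M + 1) = p * p ^ M := by ring
        rw [this]
        exact Pr_block_cong hM1 0 p
      have hXp1 : (p : ℤ_[p]) ∣ X ^ p - 1 := by
        have : X - 1 ∣ X ^ p - 1 := by simpa using sub_dvd_pow_sub_pow X 1 p
        exact ihp.trans this
      constructor
      · have : Pr p 0 (p ^ (M + 1)) - 1 = (Pr p 0 (p ^ (M + 1)) - X ^ p) + (X ^ p - 1) := by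
          ring
        rw [this]
        exact dvd_add ((dvd_pow_self (p : ℤ_[p]) (by omega : M ≠ 0)).trans hsplit) hXp1
      · -- exponent M + 1 - 1 = M
        have hk : (p : ℤ_[p]) ^ (max (M - 1) 1) ∣ X - 1 := by
          rcases Nat.eq_or_lt_of_le hM1 with h2 | h2
          · have : M = 1 := by omega
            subst this
            simpa using ihp
          · have : max (M - 1) 1 = M - 1 := by omega
            rw [this]; exact ihpow
        have hlift := pow_p_lift (le_max_right _ _) hk
        have hge : M ≤ max (M - 1) 1 + 1 := by omega
        have hXpM : (p : ℤ_[p]) ^ M ∣ X ^ p - 1 :=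
          (pow_dvd_pow _ hge).trans hlift
        have : Pr p 0 (p ^ (M + 1)) - 1 = (Pr p 0 (p ^ (M + 1)) - X ^ p) + (X ^ p - 1) := by
          ring
        rw [this]
        simpa using dvd_add hsplit hXpM

end IncGamma

namespace IncGamma

variable {p : ℕ} [Fact p.Prime]

/-- The sequence `c_n(z)`: `c 0 = 0`, `c (n+1) = h(n) c n + z^n`. -/
noncomputable def c (p : ℕ) [Fact p.Prime] (z : ℤ_[p]) : ℕ → ℤ_[p]
  | 0 => 0
  | n + 1 => hn p n * c p z n + z ^ n

/-- Inhomogeneous part of the unrolled recurrence. -/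
noncomputable def R (p : ℕ) [Fact p.Prime] (n m : ℕ) (z : ℤ_[p]) : ℤ_[p] :=
  ∑ k ∈ Finset.range m, z ^ (n + k) * Pr p (n + k + 1) (m - 1 - k)

lemma unroll (z : ℤ_[p]) (n m : ℕ) :
    c p z (n + m) = Pr p n m * c p z n + R p n m z := by
  induction m with
  | zero => simp [Pr, R, c]
  | succ m ih =>
    have : n + (m + 1) = (n + m) + 1 := by omega
    rw [this]
    show hn p (n + m) * c p z (n + m) + z ^ (n + m) = _
    rw [ih]
    have hPr : Pr p n (m + 1) = hn p (n + m) * Pr p n m := by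
      rw [Pr_succ, mul_comm]
    have hR : R p n (m + 1) z = hn p (n + m) * R p n m z + z ^ (n + m) := by
      unfold R
      rw [Finset.sum_range_succ]
      have hlast : z ^ (n + m) * Pr p (n + m + 1) (m + 1 - 1 - m) = z ^ (n + m) := by
        have : m + 1 - 1 - m = 0 := by omega
        rw [this]
        simp [Pr]
      rw [hlast, Finset.mul_sum]
      congr 1
      refine Finset.sum_congr rfl fun k hk => ?_
      simp only [Finset.mem_range] at hk
      have h1 : m + 1 - 1 - k = (m - 1 - k) + 1 := by omega
      rw [h1, Pr_succ]
      have h2 : n + k + 1 + (m - 1 - k) = n + m := by omega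
      rw [h2]
      ring
    rw [hPr, hR]
    ring

lemma z_pow_p_pow {z : ℤ_[p]} (hz : (p : ℤ_[p]) ∣ z - 1) (N : ℕ) :
    (p : ℤ_[p]) ^ (N + 1) ∣ z ^ (p ^ N) - 1 := by
  induction N with
  | zero => simpa using hz
  | succ N ih =>
    have : z ^ (p ^ (N + 1)) = (z ^ (p ^ N)) ^ p := by
      rw [← pow_mul, pow_succ]
    rw [this]
    exact pow_p_lift (by omega) ih

lemma z_pow_mul {z : ℤ_[p]} (hz : (p : ℤ_[p]) ∣ z - 1) (N a : ℕ) :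
    (p : ℤ_[p]) ^ (N + 1) ∣ z ^ (a * p ^ N) - 1 := by
  have h1 : z ^ (a * p ^ N) = (z ^ (p ^ N)) ^ a := by
    rw [← pow_mul, mul_comm]
  rw [h1]
  have h2 : z ^ (p ^ N) - 1 ∣ (z ^ (p ^ N)) ^ a - 1 := by
    simpa using sub_dvd_pow_sub_pow (z ^ (p ^ N)) 1 a
  exact (z_pow_p_pow hz N).trans h2

lemma dvd_sum_sub_sum {ι : Type*} {q : ℤ_[p]} (s : Finset ι) (f g : ι → ℤ_[p])
    (h : ∀ i ∈ s, q ∣ f i - g i) : q ∣ (∑ i ∈ s, f i) - ∑ i ∈ s, g i := by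
  rw [← Finset.sum_sub_distrib]
  exact Finset.dvd_sum h

lemma sum_range_mul_split (F : ℕ → ℤ_[p]) (b L : ℕ) :
    ∑ k ∈ Finset.range (b * L), F k
      = ∑ a ∈ Finset.range b, ∑ r ∈ Finset.range L, F (a * L + r) := by
  induction b with
  | zero => simp
  | succ b ih =>
    rw [Nat.succ_mul, Finset.sum_range_add, ih, Finset.sum_range_succ]

lemma R_rec {z : ℤ_[p]} (hz : (p : ℤ_[p]) ∣ z - 1) (n N : ℕ) (hN : 2 ≤ N) :
    (p : ℤ_[p]) ^ (N - 1) ∣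
      R p n (p ^ N) z
        - (∑ a ∈ Finset.range p, (Pr p 0 (p ^ (N - 1))) ^ a) * R p n (p ^ (N - 1)) z := by
  set M := N - 1 with hMdef
  have hM1 : 1 ≤ M := by omega
  set P' := p ^ M with hP'
  have hpN : p ^ N = p * P' := by
    rw [hP', ← pow_succ']
    congr 1
    omega
  set X := Pr p 0 P' with hXdef
  -- the target sum, reflected
  have hreflect : (∑ a ∈ Finset.range p, X ^ a) = ∑ a ∈ Finset.range p, X ^ (p - 1 - a) :=
    (Finset.sum_range_reflect (fun a => X ^ a) p).symm
  have hRsplit : R p n (p ^ N) z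
      = ∑ a ∈ Finset.range p, ∑ r ∈ Finset.range P',
          z ^ (n + (a * P' + r)) * Pr p (n + (a * P' + r) + 1) (p * P' - 1 - (a * P' + r)) := by
    unfold R
    rw [hpN]
    exact sum_range_mul_split _ p P'
  have hRHS : (∑ a ∈ Finset.range p, X ^ a) * R p n P' z
      = ∑ a ∈ Finset.range p, ∑ r ∈ Finset.range P',
          X ^ (p - 1 - a) * (z ^ (n + r) * Pr p (n + r + 1) (P' - 1 - r)) := by
    rw [hreflect, Finset.sum_mul]
    refine Finset.sum_congr rfl fun a _ => ?_
    unfold R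
    rw [Finset.mul_sum]
  rw [hRsplit, hRHS]
  refine dvd_sum_sub_sum _ _ _ fun a ha => ?_
  refine dvd_sum_sub_sum _ _ _ fun r hr => ?_
  simp only [Finset.mem_range] at ha hr
  -- decompose the product length
  have hA : p = a + (p - 1 - a) + 1 := by omega
  have hlen : p * P' - 1 - (a * P' + r) = (P' - 1 - r) + (p - 1 - a) * P' := by
    have e1 : p * P' = a * P' + (p - 1 - a) * P' + P' := by
      conv_lhs => rw [hA]
      ring
    omega
  have hstart : n + (a * P' + r) + 1 = (n + r + 1) + a * P' := by omega
  have hstart2 : (n + r + 1) + a * P' + (P' - 1 - r) = n + (a + 1) * P' := by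
    have e2 : (a + 1) * P' = a * P' + P' := by ring
    omega
  rw [hlen, hstart, Pr_add, hstart2]
  -- now the term is z^(n+aP'+r) * (PrA * PrB) with
  -- PrA = Pr ((n+r+1) + a*P') (P'-1-r), PrB = Pr (n+(a+1)*P') ((p-1-a)*P')
  -- congruences
  have c1 : (p : ℤ_[p]) ^ M ∣ z ^ (n + (a * P' + r)) - z ^ (n + r) := by
    have : z ^ (n + (a * P' + r)) - z ^ (n + r) = z ^ (n + r) * (z ^ (a * P') - 1) := by
      rw [mul_sub, mul_one, ← pow_add]
      congr 2
      omega
    rw [this]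
    refine Dvd.dvd.mul_left ?_ _
    have := z_pow_mul hz M a
    exact (pow_dvd_pow _ (by omega : M ≤ M + 1)).trans this
  have c2 : (p : ℤ_[p]) ^ M ∣ Pr p ((n + r + 1) + a * P') (P' - 1 - r) - Pr p (n + r + 1) (P' - 1 - r) :=
    Pr_cong_start hM1 (n + r + 1) a (P' - 1 - r)
  have c3 : (p : ℤ_[p]) ^ M ∣ Pr p (n + (a + 1) * P') ((p - 1 - a) * P') - X ^ (p - 1 - a) :=
    Pr_block_cong hM1 _ _
  have step1 : (p : ℤ_[p]) ^ M ∣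
      z ^ (n + (a * P' + r)) * Pr p ((n + r + 1) + a * P') (P' - 1 - r)
        - z ^ (n + r) * Pr p (n + r + 1) (P' - 1 - r) :=
    dvd_mul_sub_mul c1 c2
  have step2 : (p : ℤ_[p]) ^ M ∣
      (z ^ (n + (a * P' + r)) * Pr p ((n + r + 1) + a * P') (P' - 1 - r))
          * Pr p (n + (a + 1) * P') ((p - 1 - a) * P')
        - (z ^ (n + r) * Pr p (n + r + 1) (P' - 1 - r)) * X ^ (p - 1 - a) :=
    dvd_mul_sub_mul step1 c3
  have : z ^ (n + (a * P' + r)) * (Pr p ((n + r + 1) + a * P') (P' - 1 - r)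
          * Pr p (n + (a + 1) * P') ((p - 1 - a) * P'))
        - X ^ (p - 1 - a) * (z ^ (n + r) * Pr p (n + r + 1) (P' - 1 - r))
      = (z ^ (n + (a * P' + r)) * Pr p ((n + r + 1) + a * P') (P' - 1 - r))
          * Pr p (n + (a + 1) * P') ((p - 1 - a) * P')
        - (z ^ (n + r) * Pr p (n + r + 1) (P' - 1 - r)) * X ^ (p - 1 - a) := by
    ring
  rw [this]
  exact step2

lemma R_small (hp : p ≠ 2) {z : ℤ_[p]} (hz : (p : ℤ_[p]) ∣ z - 1) (n : ℕ) :
    ∀ N, (p : ℤ_[p]) ^ (N - 1) ∣ R p n (p ^ N) z := by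
  intro N
  induction N with
  | zero => simp
  | succ N ih =>
    rcases Nat.lt_or_ge (N + 1) 2 with h2 | h2
    · have : N + 1 - 1 = 0 := by omega
      rw [this]
      simp
    · have hrec := R_rec hz n (N + 1) h2
      have hN1 : 1 ≤ N := by omega
      set X := Pr p 0 (p ^ (N + 1 - 1)) with hX
      have hXsimp : N + 1 - 1 = N := by omega
      have hpX : (p : ℤ_[p]) ∣ X - 1 := by
        rw [hX, hXsimp]
        exact (wilsonG hp N hN1).1
      have hS : (p : ℤ_[p]) ∣ ∑ a ∈ Finset.range p, X ^ a := dvd_geom_sum_p hpX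
      have hR' : (p : ℤ_[p]) ^ (N - 1) ∣ R p n (p ^ (N + 1 - 1)) z := by
        rw [hXsimp]; exact ih
      have hprod : (p : ℤ_[p]) ^ (N + 1 - 1) ∣
          (∑ a ∈ Finset.range p, X ^ a) * R p n (p ^ (N + 1 - 1)) z := by
        have : (p : ℤ_[p]) ^ (N + 1 - 1) = (p : ℤ_[p]) * (p : ℤ_[p]) ^ (N - 1) := by
          rw [← pow_succ']
          congr 1
          omega
        rw [this]
        exact mul_dvd_mul hS hR'
      have := dvd_add hrec hprod
      simpa using this

lemma main_cong (hp : p ≠ 2) {z : ℤ_[p]} (hz : (p : ℤ_[p]) ∣ z - 1) (n N : ℕ) (hN : 1 ≤ N) :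
    (p : ℤ_[p]) ^ (N - 1) ∣ c p z (n + p ^ N) - c p z n := by
  rw [unroll]
  have h1 : (p : ℤ_[p]) ^ (N - 1) ∣ Pr p n (p ^ N) - 1 := by
    have ha : (p : ℤ_[p]) ^ N ∣ Pr p n (p ^ N) - Pr p 0 (p ^ N) := Pr_shift hN n
    have hb : (p : ℤ_[p]) ^ (N - 1) ∣ Pr p 0 (p ^ N) - 1 := (wilsonG hp N hN).2
    have := dvd_add ((pow_dvd_pow _ (by omega : N - 1 ≤ N)).trans ha) hb
    simpa using this
  have h2 : (p : ℤ_[p]) ^ (N - 1) ∣ R p n (p ^ N) z := R_small hp hz n N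
  have : Pr p n (p ^ N) * c p z n + R p n (p ^ N) z - c p z n
      = (Pr p n (p ^ N) - 1) * c p z n + R p n (p ^ N) z := by ring
  rw [this]
  exact dvd_add (h1.mul_right _) h2

lemma c_tel (hp : p ≠ 2) {z : ℤ_[p]} (hz : (p : ℤ_[p]) ∣ z - 1) (n N : ℕ) (hN : 1 ≤ N) :
    ∀ t, (p : ℤ_[p]) ^ (N - 1) ∣ c p z (n + t * p ^ N) - c p z n := by
  intro t
  induction t with
  | zero => simp
  | succ t ih =>
    have h1 : n + (t + 1) * p ^ N = (n + t * p ^ N) + p ^ N := by ring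
    rw [h1]
    have := dvd_add (main_cong hp hz (n + t * p ^ N) N hN) ih
    simpa using this

lemma c_mod (hp : p ≠ 2) {z : ℤ_[p]} (hz : (p : ℤ_[p]) ∣ z - 1) {m n N : ℕ} (hN : 1 ≤ N)
    (h : m % p ^ N = n % p ^ N) :
    (p : ℤ_[p]) ^ (N - 1) ∣ c p z m - c p z n := by
  rcases Nat.le_total n m with hle | hle
  · have hdvd : p ^ N ∣ m - n := (Nat.modEq_iff_dvd' hle).mp h.symm
    obtain ⟨t, ht⟩ := hdvd
    rw [Nat.mul_comm] at ht
    have : m = n + t * p ^ N := by omega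
    rw [this]
    exact c_tel hp hz n N hN t
  · have hdvd : p ^ N ∣ n - m := (Nat.modEq_iff_dvd' hle).mp h
    obtain ⟨t, ht⟩ := hdvd
    rw [Nat.mul_comm] at ht
    have : n = m + t * p ^ N := by omega
    rw [this]
    have := c_tel hp hz m N hN t
    rw [← dvd_neg] at this
    simpa using this

lemma c_z_cong {z z' : ℤ_[p]} {q : ℤ_[p]} (h : q ∣ z - z') :
    ∀ n, q ∣ c p z n - c p z' n := by
  intro n
  induction n with
  | zero => simp [c]
  | succ n ih =>
    show q ∣ (hn p n * c p z n + z ^ n) - (hn p n * c p z' n + z' ^ n)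
    have heq : (hn p n * c p z n + z ^ n) - (hn p n * c p z' n + z' ^ n)
        = hn p n * (c p z n - c p z' n) + (z ^ n - z' ^ n) := by ring
    rw [heq]
    exact dvd_add (ih.mul_left _) (h.trans (sub_dvd_pow_sub_pow z z' n))

end IncGamma

namespace IncGamma

open Filter Topology

variable {p : ℕ} [Fact p.Prime]

lemma dvd_iff_norm (x : ℤ_[p]) (N : ℕ) :
    (p : ℤ_[p]) ^ N ∣ x ↔ ‖x‖ ≤ (p : ℝ) ^ (-(N : ℤ)) := by
  rw [PadicInt.norm_le_pow_iff_mem_span_pow, Ideal.mem_span_singleton]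

lemma nat_cong_iff (m n N : ℕ) :
    (p : ℤ_[p]) ^ N ∣ ((m : ℤ_[p]) - n) ↔ m % p ^ N = n % p ^ N := by
  have h1 : ((m : ℤ_[p]) - n) = (((m : ℤ) - (n : ℤ) : ℤ) : ℤ_[p]) := by push_cast; ring
  rw [h1, PadicInt.pow_p_dvd_int_iff]
  have h2 : (m % p ^ N = n % p ^ N) ↔ Nat.ModEq (p ^ N) m n := Iff.rfl
  rw [h2, Nat.modEq_iff_dvd]
  have h3 : ((p ^ N : ℕ) : ℤ) = (p : ℤ) ^ N := by push_cast; ring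
  rw [h3]
  exact dvd_sub_comm

lemma appr_dvd (s : ℤ_[p]) (N : ℕ) : (p : ℤ_[p]) ^ N ∣ s - (s.appr N : ℤ_[p]) :=
  Ideal.mem_span_singleton.mp (s.appr_spec N)

lemma appr_cong_of_dvd {s s' : ℤ_[p]} {N : ℕ} (h : (p : ℤ_[p]) ^ N ∣ s - s') :
    s.appr N % p ^ N = s'.appr N % p ^ N := by
  rw [← nat_cong_iff]
  have h1 := appr_dvd s N
  have h2 := appr_dvd s' N
  have : ((s.appr N : ℤ_[p]) - s'.appr N) = (s - s'.appr N) - (s - (s.appr N : ℤ_[p])) := by ring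
  rw [this]
  have h3 : (p : ℤ_[p]) ^ N ∣ s - s'.appr N := by
    have : s - (s'.appr N : ℤ_[p]) = (s - s') + (s' - s'.appr N) := by ring
    rw [this]; exact dvd_add h h2
  exact dvd_sub h3 h1

lemma appr_tail_cong (s : ℤ_[p]) {N M : ℕ} (h : N ≤ M) :
    s.appr M % p ^ N = s.appr N % p ^ N := by
  rw [← nat_cong_iff]
  have h1 : (p : ℤ_[p]) ^ N ∣ s - s.appr M :=
    (pow_dvd_pow _ h).trans (appr_dvd s M)
  have h2 := appr_dvd s N
  have : ((s.appr M : ℤ_[p]) - s.appr N) = (s - s.appr N) - (s - s.appr M) := by ring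
  rw [this]
  exact dvd_sub h2 h1

/-- ultrametric triangle for differences -/
lemma norm_sub_le_max {a b c : ℤ_[p]} {m : ℝ} (h1 : ‖a - b‖ ≤ m) (h2 : ‖b - c‖ ≤ m) :
    ‖a - c‖ ≤ m := by
  have he : a - c = (a - b) + (b - c) := by ring
  rw [he]
  exact le_trans (PadicInt.nonarchimedean _ _) (max_le h1 h2)

/-- The extension of `c` to `ℤ_[p]` in the first variable, defined as a limit. -/
noncomputable def Gam0 (p : ℕ) [Fact p.Prime] (s z : ℤ_[p]) : ℤ_[p] :=
  limUnder atTop (fun N => c p z (s.appr N))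

lemma exists_small (ε : ℝ) (hε : 0 < ε) :
    ∃ N : ℕ, 1 ≤ N ∧ (p : ℝ) ^ (-((N : ℤ) - 1)) < ε := by
  have hp1 : 1 < (p : ℝ) := by exact_mod_cast (Fact.out : p.Prime).one_lt
  have hinv : (p : ℝ)⁻¹ < 1 := inv_lt_one_of_one_lt₀ hp1
  have hpos : 0 ≤ (p : ℝ)⁻¹ := by positivity
  obtain ⟨k, hk⟩ := exists_pow_lt_of_lt_one hε hinv
  refine ⟨k + 1, by omega, ?_⟩
  have : (p : ℝ) ^ (-(((k + 1 : ℕ) : ℤ) - 1)) = ((p : ℝ)⁻¹) ^ k := by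
    rw [inv_pow, ← zpow_natCast (p : ℝ) k, ← zpow_neg]
    congr 1
    push_cast
    ring
  rw [this]
  exact hk

lemma norm_le_r_of_dvd {x : ℤ_[p]} {N : ℕ} (hN : 1 ≤ N)
    (h : (p : ℤ_[p]) ^ (N - 1) ∣ x) : ‖x‖ ≤ (p : ℝ) ^ (-((N : ℤ) - 1)) := by
  have := (dvd_iff_norm x (N - 1)).mp h
  have he : (-(((N - 1 : ℕ)) : ℤ)) = -((N : ℤ) - 1) := by omega
  rwa [he] at this

lemma cauchy_seq_c (hp : p ≠ 2) {z : ℤ_[p]} (hz : (p : ℤ_[p]) ∣ z - 1) (s : ℤ_[p]) :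
    CauchySeq (fun N => c p z (s.appr N)) := by
  rw [Metric.cauchySeq_iff']
  intro ε hε
  obtain ⟨N, hN1, hNε⟩ := exists_small (p := p) ε hε
  refine ⟨N, fun n hn => ?_⟩
  rw [dist_eq_norm]
  have hcong : s.appr n % p ^ N = s.appr N % p ^ N := appr_tail_cong s hn
  have hdvd := c_mod hp hz hN1 hcong
  exact lt_of_le_of_lt (norm_le_r_of_dvd hN1 hdvd) hNε

lemma tendsto_Gam0 (hp : p ≠ 2) {z : ℤ_[p]} (hz : (p : ℤ_[p]) ∣ z - 1) (s : ℤ_[p]) :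
    Tendsto (fun N => c p z (s.appr N)) atTop (𝓝 (Gam0 p s z)) := by
  obtain ⟨l, hl⟩ := cauchySeq_tendsto_of_complete (cauchy_seq_c hp hz s)
  have : Gam0 p s z = l := hl.limUnder_eq
  rw [this]
  exact hl

lemma Gam0_est (hp : p ≠ 2) {z : ℤ_[p]} (hz : (p : ℤ_[p]) ∣ z - 1) (s : ℤ_[p]) {N : ℕ}
    (hN : 1 ≤ N) : ‖Gam0 p s z - c p z (s.appr N)‖ ≤ (p : ℝ) ^ (-((N : ℤ) - 1)) := by
  have htend : Tendsto (fun M => c p z (s.appr M) - c p z (s.appr N)) atTop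
      (𝓝 (Gam0 p s z - c p z (s.appr N))) :=
    (tendsto_Gam0 hp hz s).sub_const _
  refine le_of_tendsto htend.norm ?_
  filter_upwards [eventually_ge_atTop N] with M hM
  exact norm_le_r_of_dvd hN (c_mod hp hz hN (appr_tail_cong s hM))

lemma Gam0_nat (hp : p ≠ 2) {z : ℤ_[p]} (hz : (p : ℤ_[p]) ∣ z - 1) (n : ℕ) :
    Gam0 p (n : ℤ_[p]) z = c p z n := by
  have htend := tendsto_Gam0 hp hz (n : ℤ_[p])
  have htend2 : Tendsto (fun N => c p z (((n : ℤ_[p])).appr N)) atTop (𝓝 (c p z n)) := by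
    rw [Metric.tendsto_atTop]
    intro ε hε
    obtain ⟨N, hN1, hNε⟩ := exists_small (p := p) ε hε
    refine ⟨N, fun M hM => ?_⟩
    rw [dist_eq_norm]
    have hc : ((n : ℤ_[p])).appr M % p ^ M = n % p ^ M := by
      rw [← nat_cong_iff]
      have := appr_dvd (n : ℤ_[p]) M
      have he : (((n : ℤ_[p]).appr M : ℤ_[p])) - n = -((n : ℤ_[p]) - (n : ℤ_[p]).appr M) := by ring
      rw [he]
      exact dvd_neg.mpr this
    have hc' : ((n : ℤ_[p])).appr M % p ^ N = n % p ^ N :=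
      Nat.ModEq.of_dvd (pow_dvd_pow p hM) hc
    have hdvd := c_mod hp hz hN1 hc'
    exact lt_of_le_of_lt (norm_le_r_of_dvd hN1 hdvd) hNε
  exact tendsto_nhds_unique htend htend2

lemma Gam0_cong (hp : p ≠ 2) {z z' : ℤ_[p]} (hz : (p : ℤ_[p]) ∣ z - 1)
    (hz' : (p : ℤ_[p]) ∣ z' - 1) {s s' : ℤ_[p]} {N : ℕ} (hN : 1 ≤ N)
    (hss : (p : ℤ_[p]) ^ N ∣ s - s') (hzz : (p : ℤ_[p]) ^ N ∣ z - z') :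
    ‖Gam0 p s z - Gam0 p s' z'‖ ≤ (p : ℝ) ^ (-((N : ℤ) - 1)) := by
  have e1 := Gam0_est hp hz s hN
  have e4 : ‖Gam0 p s' z' - c p z' (s'.appr N)‖ ≤ (p : ℝ) ^ (-((N : ℤ) - 1)) :=
    Gam0_est hp hz' s' hN
  have e2 : ‖c p z (s.appr N) - c p z (s'.appr N)‖ ≤ (p : ℝ) ^ (-((N : ℤ) - 1)) :=
    norm_le_r_of_dvd hN (c_mod hp hz hN (appr_cong_of_dvd hss))
  have e3 : ‖c p z (s'.appr N) - c p z' (s'.appr N)‖ ≤ (p : ℝ) ^ (-((N : ℤ) - 1)) := by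
    refine norm_le_r_of_dvd hN ?_
    have hzz' : (p : ℤ_[p]) ^ (N - 1) ∣ z - z' :=
      (pow_dvd_pow (p : ℤ_[p]) (by omega : N - 1 ≤ N)).trans hzz
    exact c_z_cong hzz' (s'.appr N)
  have e4' : ‖c p z' (s'.appr N) - Gam0 p s' z'‖ ≤ (p : ℝ) ^ (-((N : ℤ) - 1)) := by
    rw [← norm_neg]; simpa using e4
  exact norm_sub_le_max e1 (norm_sub_le_max e2 (norm_sub_le_max e3 e4'))

end IncGamma

namespace IncGamma

open Filter Topology

variable {p : ℕ} [Fact p.Prime]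

lemma coe_continuous : Continuous (fun x : ℤ_[p] => (x : ℚ_[p])) := by
  have : Isometry (fun x : ℤ_[p] => (x : ℚ_[p])) := Isometry.of_dist_eq fun a b => rfl
  exact this.continuous

lemma two_mul_val_fact_le (hp : p ≠ 2) (n : ℕ) : 2 * padicValNat p n.factorial ≤ n := by
  have hleg := sub_one_mul_padicValNat_factorial (p := p) n
  have hp3 : 3 ≤ p := by
    have h2 := (Fact.out : p.Prime).two_le
    rcases Nat.lt_or_ge p 3 with h | h
    · interval_cases p
      · exact absurd rfl hp
    · exact h
  have h1 : 2 * padicValNat p n.factorial ≤ (p - 1) * padicValNat p n.factorial :=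
    Nat.mul_le_mul_right _ (by omega)
  omega

lemma expp_term_bound (hp : p ≠ 2) (z : ℤ_[p]) (n : ℕ) :
    ‖((p : ℚ_[p]) * (z : ℚ_[p])) ^ n / (n.factorial : ℚ_[p])‖ ≤ ((Real.sqrt p)⁻¹) ^ n := by
  have hp0 : (0 : ℝ) < p := by exact_mod_cast (Fact.out : p.Prime).pos
  have hp1 : (1 : ℝ) < p := by exact_mod_cast (Fact.out : p.Prime).one_lt
  set v := padicValNat p n.factorial with hv
  have hfact : ‖((n.factorial : ℕ) : ℚ_[p])‖ = (p : ℝ) ^ (-(v : ℤ)) := by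
    rw [Padic.norm_eq_zpow_neg_valuation (by exact_mod_cast n.factorial_ne_zero), Padic.valuation_natCast]
  have hnum : ‖((p : ℚ_[p]) * (z : ℚ_[p])) ^ n‖ ≤ (p : ℝ) ^ (-(n : ℤ)) := by
    rw [norm_pow, norm_mul, Padic.norm_p]
    have hz1 : ‖(z : ℚ_[p])‖ ≤ 1 := z.2
    calc ((p : ℝ)⁻¹ * ‖(z : ℚ_[p])‖) ^ n ≤ ((p : ℝ)⁻¹ * 1) ^ n := by
          apply pow_le_pow_left₀ (by positivity)
          exact mul_le_mul_of_nonneg_left hz1 (by positivity)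
      _ = (p : ℝ) ^ (-(n : ℤ)) := by
          rw [mul_one, zpow_neg, zpow_natCast, inv_pow]
  have hle : ‖((p : ℚ_[p]) * (z : ℚ_[p])) ^ n / (n.factorial : ℚ_[p])‖
      ≤ (p : ℝ) ^ ((v : ℤ) - n) := by
    rw [norm_div]
    rw [hfact]
    rw [div_eq_mul_inv, ← zpow_neg, neg_neg]
    calc ‖((p : ℚ_[p]) * (z : ℚ_[p])) ^ n‖ * (p : ℝ) ^ (v : ℤ)
        ≤ (p : ℝ) ^ (-(n : ℤ)) * (p : ℝ) ^ (v : ℤ) :=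
          mul_le_mul_of_nonneg_right hnum (by positivity)
      _ = (p : ℝ) ^ ((v : ℤ) - n) := by rw [← zpow_add₀ (by positivity : (p:ℝ) ≠ 0)]; ring_nf
  refine hle.trans ?_
  -- (p : ℝ) ^ ((v : ℤ) - n) ≤ (sqrt p)⁻¹ ^ n, by squaring
  have hsqrt0 : 0 < Real.sqrt p := Real.sqrt_pos.mpr hp0
  have hsq : Real.sqrt p ^ 2 = p := Real.sq_sqrt hp0.le
  have h2vn := two_mul_val_fact_le hp n
  have hsq_le : ((p : ℝ) ^ ((v : ℤ) - n)) ^ 2 ≤ (((Real.sqrt p)⁻¹) ^ n) ^ 2 := by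
    have hL : ((p : ℝ) ^ ((v : ℤ) - n)) ^ 2 = (p : ℝ) ^ (2 * ((v : ℤ) - n)) := by
      rw [← zpow_natCast ((p:ℝ) ^ ((v:ℤ) - n)) 2, ← zpow_mul]
      ring_nf
    have hR : (((Real.sqrt p)⁻¹) ^ n) ^ 2 = (p : ℝ) ^ (-(n : ℤ)) := by
      rw [← pow_mul, mul_comm, pow_mul, inv_pow, hsq, zpow_neg, zpow_natCast, inv_pow]
    rw [hL, hR]
    apply zpow_le_zpow_right₀ hp1.le
    omega
  have h1 : (0:ℝ) ≤ (p : ℝ) ^ ((v : ℤ) - n) := by positivity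
  have h2 : (0:ℝ) ≤ ((Real.sqrt p)⁻¹) ^ n := by positivity
  exact (pow_le_pow_iff_left₀ h1 h2 (by norm_num)).mp hsq_le

lemma expp_continuous (hp : p ≠ 2) : Continuous (fun z : ℤ_[p] => expp p z) := by
  unfold expp
  have hr1 : (Real.sqrt p)⁻¹ < 1 := by
    have hp1 : (1 : ℝ) < p := by exact_mod_cast (Fact.out : p.Prime).one_lt
    have : 1 < Real.sqrt p := by
      rw [show (1:ℝ) = Real.sqrt 1 from (Real.sqrt_one).symm]
      exact Real.sqrt_lt_sqrt (by norm_num) hp1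
    rw [inv_lt_one_iff₀]
    right; exact this
  refine continuous_tsum (fun n => ?_)
    (summable_geometric_of_lt_one (by positivity) hr1) (fun n z => expp_term_bound hp z n)
  have hc : Continuous (fun z : ℤ_[p] => (p : ℚ_[p]) * (z : ℚ_[p])) :=
    continuous_const.mul coe_continuous
  exact ((hc.pow n).div_const _)

end IncGamma


open IncGamma in
/-- For an odd prime `p` there is a unique continuous function
`Γ : ℤ_[p] × {z : |z - 1| ≤ 1/p} → ℚ_[p]` (the `p`-adic incomplete gamma function) with
`Γ(1, z) = exp_p(pz)` and `Γ(n+1, z) = h_p(n) Γ(n, z) + z^n exp_p(pz)` for all positive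
integers `n`. -/
theorem padic_incomplete_gamma_exists_unique (p : ℕ) [Fact p.Prime] (hp : p ≠ 2) :
    ∃! Γ : ℤ_[p] × {z : ℤ_[p] // ‖z - 1‖ ≤ 1 / p} → ℚ_[p],
      Continuous Γ ∧
      (∀ z : {z : ℤ_[p] // ‖z - 1‖ ≤ 1 / p}, Γ (1, z) = expp p z.1) ∧
      (∀ n : ℕ, 0 < n → ∀ z : {z : ℤ_[p] // ‖z - 1‖ ≤ 1 / p},
        Γ ((n : ℤ_[p]) + 1, z) =
          ((moritaH p (n : ℤ_[p]) : ℚ_[p])) * Γ ((n : ℤ_[p]), z)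
            + ((z.1 : ℚ_[p])) ^ n * expp p z.1) := by
  have hz : ∀ z : {z : ℤ_[p] // ‖z - 1‖ ≤ 1 / p}, (p : ℤ_[p]) ∣ z.1 - 1 := by
    intro z
    have h := z.2
    have he : (1 : ℝ) / p = (p : ℝ) ^ (-((1 : ℕ) : ℤ)) := by
      rw [zpow_neg, Nat.cast_one, zpow_one, one_div]
    have h2 : ‖z.1 - 1‖ ≤ (p : ℝ) ^ (-((1 : ℕ) : ℤ)) := h.trans he.le
    have := (dvd_iff_norm (z.1 - 1) 1).mpr h2
    simpa using this
  set Γfun : ℤ_[p] × {z : ℤ_[p] // ‖z - 1‖ ≤ 1 / p} → ℚ_[p] :=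
    fun x => ((Gam0 p x.1 x.2.1 : ℤ_[p]) : ℚ_[p]) * expp p x.2.1 with hΓdef
  have hGcont : Continuous fun x : ℤ_[p] × {z : ℤ_[p] // ‖z - 1‖ ≤ 1 / p} =>
      Gam0 p x.1 x.2.1 := by
    rw [Metric.continuous_iff]
    intro x ε hε
    obtain ⟨N, hN1, hNε⟩ := exists_small (p := p) ε hε
    refine ⟨(p : ℝ) ^ (-(N : ℤ)),
      zpow_pos (by exact_mod_cast (Fact.out : p.Prime).pos) _, fun y hy => ?_⟩
    rw [Prod.dist_eq] at hy
    have h1 : dist y.1 x.1 < (p : ℝ) ^ (-(N : ℤ)) := lt_of_le_of_lt (le_max_left _ _) hy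
    have h2 : dist y.2 x.2 < (p : ℝ) ^ (-(N : ℤ)) := lt_of_le_of_lt (le_max_right _ _) hy
    have hss : (p : ℤ_[p]) ^ N ∣ y.1 - x.1 := by
      rw [dvd_iff_norm, ← dist_eq_norm]
      exact h1.le
    have hzz : (p : ℤ_[p]) ^ N ∣ y.2.1 - x.2.1 := by
      rw [dvd_iff_norm, ← dist_eq_norm, ← Subtype.dist_eq]
      exact h2.le
    rw [dist_eq_norm]
    exact lt_of_le_of_lt (Gam0_cong hp (hz y.2) (hz x.2) hN1 hss hzz) hNε
  have hcont : Continuous Γfun := by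
    apply Continuous.mul
    · exact coe_continuous.comp hGcont
    · exact (expp_continuous hp).comp (continuous_subtype_val.comp continuous_snd)
  have hc1 : ∀ z : ℤ_[p], c p z 1 = 1 := by
    intro z
    show hn p 0 * c p z 0 + z ^ 0 = 1
    simp [c]
  have hval : ∀ (n : ℕ) (z : {z : ℤ_[p] // ‖z - 1‖ ≤ 1 / p}),
      Γfun ((n : ℤ_[p]), z) = ((c p z.1 n : ℤ_[p]) : ℚ_[p]) * expp p z.1 := by
    intro n z
    rw [hΓdef]
    simp only []
    rw [Gam0_nat hp (hz z) n]
  have hprop1 : ∀ z : {z : ℤ_[p] // ‖z - 1‖ ≤ 1 / p}, Γfun (1, z) = expp p z.1 := by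
    intro z
    have h := hval 1 z
    rw [Nat.cast_one] at h
    rw [h, hc1]
    simp
  have hprop2 : ∀ n : ℕ, 0 < n → ∀ z : {z : ℤ_[p] // ‖z - 1‖ ≤ 1 / p},
      Γfun ((n : ℤ_[p]) + 1, z) =
        ((moritaH p (n : ℤ_[p]) : ℚ_[p])) * Γfun ((n : ℤ_[p]), z)
          + ((z.1 : ℚ_[p])) ^ n * expp p z.1 := by
    intro n _ z
    have e1 : ((n : ℤ_[p]) + 1) = (((n + 1 : ℕ)) : ℤ_[p]) := by push_cast; ring
    rw [e1, hval (n + 1) z, hval n z]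
    have e2 : c p z.1 (n + 1) = hn p n * c p z.1 n + z.1 ^ n := rfl
    rw [e2]
    have e3 : hn p n = moritaH p (n : ℤ_[p]) := rfl
    push_cast
    rw [e3]
    ring
  refine ⟨Γfun, ⟨hcont, hprop1, hprop2⟩, ?_⟩
  -- uniqueness
  intro Γ' hΓ'
  obtain ⟨hcont', h1', hrec'⟩ := hΓ'
  have hnatval : ∀ n : ℕ, 1 ≤ n → ∀ z : {z : ℤ_[p] // ‖z - 1‖ ≤ 1 / p},
      Γ' ((n : ℤ_[p]), z) = ((c p z.1 n : ℤ_[p]) : ℚ_[p]) * expp p z.1 := by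
    intro n hn1
    induction n, hn1 using Nat.le_induction with
    | base =>
      intro z
      rw [Nat.cast_one, h1' z, hc1]
      simp
    | succ n hn1 ih =>
      intro z
      have e1 : (((n + 1 : ℕ)) : ℤ_[p]) = (n : ℤ_[p]) + 1 := by push_cast; ring
      rw [e1, hrec' n hn1 z, ih z]
      have e2 : c p z.1 (n + 1) = hn p n * c p z.1 n + z.1 ^ n := rfl
      rw [e2]
      have e3 : hn p n = moritaH p (n : ℤ_[p]) := rfl
      push_cast
      rw [e3]
      ring
  have hdense : Dense {x : ℤ_[p] × {z : ℤ_[p] // ‖z - 1‖ ≤ 1 / p} |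
      ∃ n : ℕ, 1 ≤ n ∧ x.1 = (n : ℤ_[p])} := by
    rw [Metric.dense_iff]
    intro x r hr
    obtain ⟨N, hN1, hNr⟩ := exists_small (p := p) r hr
    set m : ℕ := x.1.appr N + p ^ N with hm
    refine ⟨((m : ℤ_[p]), x.2), ?_, ?_⟩
    · rw [Metric.mem_ball, Prod.dist_eq]
      have hd2 : dist x.2 x.2 = 0 := dist_self _
      have hdvd : (p : ℤ_[p]) ^ N ∣ (m : ℤ_[p]) - x.1 := by
        have he : (m : ℤ_[p]) - x.1 = (p : ℤ_[p]) ^ N - (x.1 - (x.1.appr N : ℤ_[p])) := by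
          rw [hm]; push_cast; ring
        rw [he]
        exact dvd_sub (dvd_refl _) (appr_dvd x.1 N)
      have hnorm : dist (m : ℤ_[p]) x.1 ≤ (p : ℝ) ^ (-(N : ℤ)) := by
        rw [dist_eq_norm]
        exact (dvd_iff_norm _ N).mp hdvd
      have hlt : dist (m : ℤ_[p]) x.1 < r := by
        refine lt_of_le_of_lt (hnorm.trans ?_) hNr
        apply zpow_le_zpow_right₀
        · exact_mod_cast (Fact.out : p.Prime).one_lt.le
        · omega
      rw [hd2]
      exact max_lt hlt hr
    · refine ⟨m, ?_, rfl⟩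
      have : 1 ≤ p ^ N := Nat.one_le_pow _ _ (Fact.out : p.Prime).pos
      omega
  refine Continuous.ext_on hdense hcont' hcont ?_
  intro x hx
  obtain ⟨n, hn1, he⟩ := hx
  have hx2 : x = ((n : ℤ_[p]), x.2) := Prod.ext he rfl
  rw [hx2, hnatval n hn1 x.2, hval n x.2]
end

section
/- Let G be a topological group. For each positive integer n, let t_n denote the number of continuous homomorphisms from G to the symmetric group S_n (with the discrete topology), set t_0 = 1, and let M_n denote the number of open subgroups of G of index n; assume all of these sets are finite (this holds when G is topologically finitely generated). Then in the formal power series ring ℚ[[x]] one has exp( Σ_{n ≥ 1} (M_n / n) x^n ) = Σ_{n ≥ 0} (t_n / n!) x^n, i.e. exp( Σ_H x^{[G:H]} / [G:H] ) = Σ_{n ≥ 0} (t_n / n!) x^n, where H runs over the open subgroups of G of finite index. -/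
/-- The number of continuous homomorphisms `G → S_n`, where the symmetric group `S_n`
carries the discrete topology. -/
noncomputable def contHomCount (G : Type*) [Group G] [TopologicalSpace G] (n : ℕ) : ℕ :=
  Nat.card {φ : G →* Equiv.Perm (Fin n) // @Continuous G (Equiv.Perm (Fin n)) _ ⊥ ⇑φ}

/-- The number of open subgroups of `G` of index `n`. -/
noncomputable def openSubgroupCount (G : Type*) [Group G] [TopologicalSpace G] (n : ℕ) : ℕ :=
  Nat.card {H : Subgroup G // IsOpen (H : Set G) ∧ H.index = n}

/-- The formal exponential `exp` composed with a power series `A` (with zero constant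
term): the `n`-th coefficient of `exp ∘ A` is `∑_{k=0}^{n} (coeff n of A^k) / k!`
(for `A` with zero constant term, `coeff n (A^k) = 0` when `k > n`). -/
noncomputable def expComp (A : PowerSeries ℚ) : PowerSeries ℚ :=
  PowerSeries.mk fun n =>
    ∑ k ∈ Finset.range (n + 1), (PowerSeries.coeff n (A ^ k)) / (k.factorial : ℚ)

/-!
`F = exp A` is the unique power series with constant term `1` and `F' = F · A'`. For
`A = ∑ Mₙ xⁿ / n` and `T = ∑ tₙ xⁿ / n!` the equation `T' = T · A'` is the recurrence
`t_{n+1} = ∑_{k ≤ n} C(n, k) k! M_{k+1} t_{n-k}`. It counts actions of `G` on `n + 1` points by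
the orbit of one marked point: choose its `k` other elements; a transitive action on the orbit is
an open subgroup `H` of index `k + 1` (the stabiliser of the marked point) together with a
bijection `G ⧸ H ≃ orbit` sending `H` to the marked point (`k!` choices); the action on the
remaining `n - k` points is arbitrary.
-/

section PowerSeriesODE

open PowerSeries Finset Nat

lemma expComp_eq_subst_exp {A : ℚ⟦X⟧} (hA : constantCoeff A = 0) :
    expComp A = (exp ℚ).subst A := by
  ext n
  rw [expComp, coeff_mk, coeff_subst' (HasSubst.of_constantCoeff_zero' hA),
    finsum_eq_sum_of_support_subset (s := range (n + 1))]
  · refine sum_congr rfl fun k _ => ?_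
    simp [div_eq_inv_mul]
  · intro k hk
    by_contra hkn
    have hXk : X ^ k ∣ A ^ k := pow_dvd_pow_of_dvd (X_dvd_iff.mpr hA) k
    exact hk (by simp [X_pow_dvd_iff.mp hXk n (by simpa using hkn)])

lemma derivative_expComp {A : ℚ⟦X⟧} (hA : constantCoeff A = 0) :
    d⁄dX ℚ (expComp A) = expComp A * d⁄dX ℚ A := by
  rw [expComp_eq_subst_exp hA, derivative_subst (HasSubst.of_constantCoeff_zero' hA),
    derivative_exp]

lemma constantCoeff_expComp (A : ℚ⟦X⟧) : constantCoeff (expComp A) = 1 := by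
  rw [← coeff_zero_eq_constantCoeff_apply, expComp, coeff_mk]
  simp

lemma eq_expComp_of_derivative_eq {A F : ℚ⟦X⟧} (hA : constantCoeff A = 0)
    (hF₀ : constantCoeff F = 1) (hF : d⁄dX ℚ F = F * d⁄dX ℚ A) : F = expComp A := by
  have hE₀ := constantCoeff_expComp A
  have hdE := derivative_expComp hA
  set E := expComp A
  have hE : E⁻¹ * E = 1 := PowerSeries.inv_mul_cancel _ (by simp [hE₀])
  have hq : F * E⁻¹ = 1 := by
    refine derivative.ext ?_ (by simp [hF₀, hE₀])
    rw [Derivation.leibniz, derivative_inv', hdE, hF, derivative_one]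
    simp only [smul_eq_mul]
    linear_combination (-F * d⁄dX ℚ A * E⁻¹) * hE
  calc F = F * E⁻¹ * E := by rw [mul_assoc, hE, mul_one]
    _ = E := by rw [hq, one_mul]

lemma derivative_mk_div_factorial_of_recurrence {t M : ℕ → ℕ}
    (h : ∀ n, t (n + 1) = ∑ p ∈ antidiagonal n, n.choose p.1 * p.1 ! * M (p.1 + 1) * t p.2) :
    d⁄dX ℚ (mk fun n => (t n : ℚ) / n !) =
      (mk fun n => (t n : ℚ) / n !) * d⁄dX ℚ (mk fun n => (M n : ℚ) / n) := by
  ext n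
  rw [mul_comm, coeff_derivative, coeff_mk, coeff_mul, h, factorial_succ]
  push_cast
  rw [sum_div, sum_mul]
  refine sum_congr rfl fun p hp => ?_
  rw [← mem_antidiagonal.mp hp, coeff_derivative, coeff_mk, coeff_mk]
  have hfac : ((p.1 + p.2).choose p.1 * p.1 ! * p.2 ! : ℚ) = (p.1 + p.2)! := by
    norm_cast
    simpa using Nat.choose_mul_factorial_mul_factorial (Nat.le_add_right p.1 p.2)
  field_simp
  push_cast
  linear_combination (M (p.1 + 1) * t p.2 * (p.1 + 1) : ℚ) * hfac

end PowerSeriesODE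

section Combinatorics

open Equiv
open scoped Nat

variable {β γ : Type*}

lemma Nat.card_subtype_ne [Finite β] (b : β) : Nat.card {y // y ≠ b} = Nat.card β - 1 := by
  classical
  have := Fintype.ofFinite β
  simp [Nat.card_eq_fintype_card, Fintype.card_subtype_compl]

lemma Nat.card_subtype_equiv_apply_eq [Finite β] (c : γ) (b : β) (h : Nat.card γ = Nat.card β) :
    Nat.card {e : γ ≃ β // e c = b} = (Nat.card β - 1)! := by
  classical
  have : Finite γ := Nat.finite_of_card_ne_zero (h ▸ Nat.card_ne_zero.mpr ⟨⟨b⟩, inferInstance⟩)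
  have hne : Nat.card {x // x ≠ c} = Nat.card {y // y ≠ b} := by
    rw [Nat.card_subtype_ne, Nat.card_subtype_ne, h]
  calc Nat.card {e : γ ≃ β // e c = b}
      = Nat.card {e : Option {x // x ≠ c} ≃ β // e none = b} :=
        Nat.card_congr <| ((optionSubtypeNe c).symm.equivCongr (Equiv.refl β)).subtypeEquiv
          fun e => by simp [equivCongr_apply_apply]
    _ = Nat.card ({x // x ≠ c} ≃ {y // y ≠ b}) := Nat.card_congr (optionSubtype b)
    _ = Nat.card (Perm {y // y ≠ b}) :=
        Nat.card_congr ((Finite.card_eq.mp hne).some.equivCongr (Equiv.refl _))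
    _ = (Nat.card β - 1)! := by rw [Nat.card_perm, Nat.card_subtype_ne]

lemma Finset.sum_subtype_none_mem {ι M : Type*} [Fintype ι] [DecidableEq ι] [AddCommMonoid M]
    (f : ℕ → M) :
    ∑ S : {S : Finset (Option ι) // none ∈ S}, f S.1.card =
      ∑ m ∈ Finset.range (Fintype.card ι + 1), (Fintype.card ι).choose m • f (m + 1) := by
  let e : Finset ι ≃ {S : Finset (Option ι) // none ∈ S} :=
    { toFun T := ⟨T.insertNone, by simp⟩
      invFun S := S.1.eraseNone
      left_inv T := Finset.eraseNone_insertNone T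
      right_inv S := Subtype.ext <| by
        simp [Finset.insertNone_eraseNone, Finset.insert_eq_of_mem S.2] }
  rw [← e.sum_comp, ← Finset.card_univ, ← Finset.sum_powerset_apply_card, Finset.powerset_univ]
  simp [e, Finset.card_insertNone]

end Combinatorics

section PermRep

open Equiv Topology
open scoped Nat

variable {G : Type*} [Group G] {β γ : Type*}

def permStabilizer (ρ : G →* Perm β) (b : β) : Subgroup G :=
  (MulAction.stabilizer (Perm β) b).comap ρ

@[simp] lemma mem_permStabilizer {ρ : G →* Perm β} {b : β} {g : G} :
    g ∈ permStabilizer ρ b ↔ ρ g b = b := Iff.rfl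

lemma apply_eq_apply_iff_inv_mul_mem (ρ : G →* Perm β) (b : β) (g g' : G) :
    ρ g b = ρ g' b ↔ g⁻¹ * g' ∈ permStabilizer ρ b := by
  rw [mem_permStabilizer, map_mul, map_inv, Perm.mul_apply, Perm.inv_eq_iff_eq, eq_comm]

lemma permStabilizer_permCongr (e : β ≃ γ) (ρ : G →* Perm β) (y : γ) :
    permStabilizer (e.permCongrHom.toMonoidHom.comp ρ) y = permStabilizer ρ (e.symm y) := by
  ext g
  simp [permCongrHom, permCongr_apply, ← eq_symm_apply]

noncomputable def quotientEquivOfTransitive (ρ : G →* Perm β) {b : β} (hρ : ∀ x, ∃ g, ρ g b = x)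
    {H : Subgroup G} (hH : permStabilizer ρ b = H) : G ⧸ H ≃ β :=
  Equiv.ofBijective
    (Quotient.lift (fun g => ρ g b) fun g g' h =>
      (apply_eq_apply_iff_inv_mul_mem ρ b g g').2 (hH ▸ QuotientGroup.leftRel_apply.mp h))
    ⟨fun q q' => Quotient.inductionOn₂ q q' fun g g' h =>
      QuotientGroup.eq.mpr (hH ▸ (apply_eq_apply_iff_inv_mul_mem ρ b g g').1 h),
     fun x => let ⟨g, hg⟩ := hρ x; ⟨(g : G ⧸ H), hg⟩⟩

@[simp] lemma quotientEquivOfTransitive_apply_mk (ρ : G →* Perm β) {b : β}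
    (hρ : ∀ x, ∃ g, ρ g b = x) {H : Subgroup G} (hH : permStabilizer ρ b = H) (g : G) :
    quotientEquivOfTransitive ρ hρ hH g = ρ g b := rfl

section Orbit

variable [Fintype β]

open Classical in
noncomputable def orbitFinset (ρ : G →* Perm β) (a : β) : Finset β :=
  Finset.univ.filter fun x => ∃ g, ρ g a = x

lemma mem_orbitFinset {ρ : G →* Perm β} {a x : β} : x ∈ orbitFinset ρ a ↔ ∃ g, ρ g a = x := by
  simp [orbitFinset]

lemma apply_mem_orbitFinset_iff (ρ : G →* Perm β) (a : β) (g : G) (x : β) :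
    ρ g x ∈ orbitFinset ρ a ↔ x ∈ orbitFinset ρ a := by
  simp only [mem_orbitFinset]
  refine ⟨fun ⟨g₀, h⟩ => ⟨g⁻¹ * g₀, ?_⟩, fun ⟨g₀, h⟩ => ⟨g * g₀, ?_⟩⟩
  · rw [map_mul, Perm.mul_apply, h, map_inv]
    exact (ρ g).symm_apply_apply x
  · rw [map_mul, Perm.mul_apply, h]

lemma apply_mem_iff_of_orbitFinset_eq {ρ : G →* Perm β} {a : β} {S : Finset β}
    (h : orbitFinset ρ a = S) (g : G) (x : β) : ρ g x ∈ S ↔ x ∈ S :=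
  h ▸ apply_mem_orbitFinset_iff ρ a g x

end Orbit

variable [TopologicalSpace G]

variable (G) in
abbrev OpenPermRep (β : Type*) := {ρ : G →* Perm β // ∀ b, IsOpen (permStabilizer ρ b : Set G)}

variable (G) in
abbrev TransOpenPermRep (b : β) := {ρ : OpenPermRep G β // ∀ x, ∃ g, ρ.1 g b = x}

variable (G) in
abbrev OpenSubgroupOfIndex (n : ℕ) := {H : Subgroup G // IsOpen (H : Set G) ∧ H.index = n}

lemma continuous_bot_iff_isOpen_permStabilizer [IsTopologicalGroup G] [Finite β]
    (ρ : G →* Perm β) : Continuous[_, ⊥] ρ ↔ ∀ b, IsOpen (permStabilizer ρ b : Set G) := by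
  let : TopologicalSpace (Perm β) := ⊥
  have : DiscreteTopology (Perm β) := ⟨rfl⟩
  refine ⟨fun hρ b => (isOpen_discrete {σ : Perm β | σ b = b}).preimage hρ, fun h => ?_⟩
  have hker : (ρ.ker : Set G) = ⋂ b, (permStabilizer ρ b : Set G) := by
    ext g; simp [Perm.ext_iff]
  refine continuous_of_continuousAt_one ρ ?_
  rw [ContinuousAt, map_one, nhds_discrete (Perm β), Filter.tendsto_pure]
  exact (hker ▸ isOpen_iInter_of_finite h).mem_nhds (one_mem ρ.ker)

namespace OpenPermRep

@[ext] lemma ext {ρ₁ ρ₂ : OpenPermRep G β} (h : ∀ g x, ρ₁.1 g x = ρ₂.1 g x) : ρ₁ = ρ₂ :=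
  Subtype.ext (MonoidHom.ext fun g => Equiv.ext (h g))

def congr (e : β ≃ γ) : OpenPermRep G β ≃ OpenPermRep G γ where
  toFun ρ := ⟨e.permCongrHom.toMonoidHom.comp ρ.1, fun y => by
    simpa only [permStabilizer_permCongr] using ρ.2 (e.symm y)⟩
  invFun ρ := ⟨e.symm.permCongrHom.toMonoidHom.comp ρ.1, fun y => by
    simpa only [permStabilizer_permCongr] using ρ.2 (e.symm.symm y)⟩
  left_inv ρ := by ext; simp [permCongrHom, permCongr_apply]
  right_inv ρ := by ext; simp [permCongrHom, permCongr_apply]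

@[simp] lemma congr_apply (e : β ≃ γ) (ρ : OpenPermRep G β) (g : G) (y : γ) :
    (congr e ρ).1 g y = e (ρ.1 g (e.symm y)) := rfl

def ofQuotient [IsTopologicalGroup G] (H : Subgroup G) (hH : IsOpen (H : Set G)) :
    OpenPermRep G (G ⧸ H) :=
  ⟨MulAction.toPermHom G (G ⧸ H), fun q => by
    induction q using QuotientGroup.induction_on with | H g =>
    have : (permStabilizer (MulAction.toPermHom G (G ⧸ H)) g : Set G) =
        (fun x => (x * g)⁻¹ * g) ⁻¹' H := by
      ext x
      simp [QuotientGroup.eq]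
    rw [this]
    exact hH.preimage (by fun_prop)⟩

@[simp] lemma ofQuotient_apply [IsTopologicalGroup G] (H : Subgroup G) (hH : IsOpen (H : Set G))
    (g : G) (q : G ⧸ H) : (ofQuotient H hH).1 g q = g • q := rfl

def restrict (ρ : OpenPermRep G β) (p : β → Prop) (hp : ∀ g x, p (ρ.1 g x) ↔ p x) :
    OpenPermRep G {x // p x} :=
  ⟨{ toFun g := (ρ.1 g).subtypePerm (hp g)
     map_one' := by ext; simp
     map_mul' _ _ := by ext; simp only [Perm.mul_apply, Perm.subtypePerm_apply, map_mul] },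
    fun x => by
      convert ρ.2 x.1 using 2
      ext g
      simp [Subtype.ext_iff]⟩

@[simp] lemma restrict_apply (ρ : OpenPermRep G β) (p : β → Prop) (hp : ∀ g x, p (ρ.1 g x) ↔ p x)
    (g : G) (x : {x // p x}) : ((restrict ρ p hp).1 g x : β) = ρ.1 g x := rfl

def subtypeCongr (p : β → Prop) [DecidablePred p] (ρ₁ : OpenPermRep G {x // p x})
    (ρ₂ : OpenPermRep G {x // ¬p x}) : OpenPermRep G β :=
  ⟨(Perm.subtypeCongrHom p).comp (ρ₁.1.prod ρ₂.1), fun x => by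
    by_cases hx : p x
    · convert ρ₁.2 ⟨x, hx⟩ using 2
      ext g
      simp [Perm.subtypeCongr.left_apply _ _ hx, Subtype.ext_iff]
    · convert ρ₂.2 ⟨x, hx⟩ using 2
      ext g
      simp [Perm.subtypeCongr.right_apply _ _ hx, Subtype.ext_iff]⟩

lemma subtypeCongr_apply_of_pos (p : β → Prop) [DecidablePred p] (ρ₁ : OpenPermRep G {x // p x})
    (ρ₂ : OpenPermRep G {x // ¬p x}) (g : G) {x : β} (hx : p x) :
    (subtypeCongr p ρ₁ ρ₂).1 g x = ρ₁.1 g ⟨x, hx⟩ :=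
  Perm.subtypeCongr.left_apply _ _ hx

lemma subtypeCongr_apply_of_neg (p : β → Prop) [DecidablePred p] (ρ₁ : OpenPermRep G {x // p x})
    (ρ₂ : OpenPermRep G {x // ¬p x}) (g : G) {x : β} (hx : ¬p x) :
    (subtypeCongr p ρ₁ ρ₂).1 g x = ρ₂.1 g ⟨x, hx⟩ :=
  Perm.subtypeCongr.right_apply _ _ hx

end OpenPermRep

namespace TransOpenPermRep

variable {b : β}

@[ext] lemma ext {ρ₁ ρ₂ : TransOpenPermRep G b} (h : ∀ g x, ρ₁.1.1 g x = ρ₂.1.1 g x) :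
    ρ₁ = ρ₂ :=
  Subtype.ext (OpenPermRep.ext h)

def stabilizer (ρ : TransOpenPermRep G b) : OpenSubgroupOfIndex G (Nat.card β) :=
  ⟨permStabilizer ρ.1.1 b, ρ.1.2 b, by
    rw [Subgroup.index, Nat.card_congr (quotientEquivOfTransitive ρ.1.1 ρ.2 rfl)]⟩

variable [IsTopologicalGroup G]

def ofPointedEquiv {n : ℕ} (H : OpenSubgroupOfIndex G n) (e : {e : G ⧸ H.1 ≃ β // e (1 : G) = b}) :
    TransOpenPermRep G b :=
  ⟨OpenPermRep.congr e.1 (OpenPermRep.ofQuotient H.1 H.2.1), fun x => by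
    obtain ⟨g, hg⟩ := QuotientGroup.mk_surjective (e.1.symm x)
    refine ⟨g, ?_⟩
    simp [← e.2, hg]⟩

lemma permStabilizer_ofPointedEquiv {n : ℕ} (H : OpenSubgroupOfIndex G n)
    (e : {e : G ⧸ H.1 ≃ β // e (1 : G) = b}) :
    permStabilizer (ofPointedEquiv H e).1.1 b = H.1 := by
  change permStabilizer (e.1.permCongrHom.toMonoidHom.comp _) b = _
  rw [permStabilizer_permCongr, e.1.symm_apply_eq.mpr e.2.symm]
  ext g
  simp [QuotientGroup.eq]

noncomputable def stabilizerFiberEquiv (H : OpenSubgroupOfIndex G (Nat.card β)) :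
    {ρ : TransOpenPermRep G b // ρ.stabilizer = H} ≃ {e : G ⧸ H.1 ≃ β // e (1 : G) = b} where
  toFun ρ := ⟨quotientEquivOfTransitive ρ.1.1.1 ρ.1.2 (congrArg Subtype.val ρ.2), by
    change ρ.1.1.1 1 b = b
    simp⟩
  invFun e := ⟨ofPointedEquiv H e, Subtype.ext (permStabilizer_ofPointedEquiv H e)⟩
  left_inv ρ := by
    ext g x
    obtain ⟨g₀, rfl⟩ := ρ.1.2 x
    set e := quotientEquivOfTransitive ρ.1.1.1 ρ.1.2 (congrArg Subtype.val ρ.2)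
    have hx : e.symm (ρ.1.1.1 g₀ b) = g₀ := e.symm_apply_eq.mpr rfl
    change e (g • e.symm _) = _
    rw [hx, MulAction.Quotient.smul_mk, smul_eq_mul]
    change ρ.1.1.1 (g * g₀) b = _
    rw [map_mul, Perm.mul_apply]
  right_inv e := by
    ext q
    induction q using QuotientGroup.induction_on with | H g =>
    simp [ofPointedEquiv, ← e.2]

lemma card_eq_mul_factorial [Finite β] (b : β) [Finite (TransOpenPermRep G b)] :
    Nat.card (TransOpenPermRep G b) =
      Nat.card (OpenSubgroupOfIndex G (Nat.card β)) * (Nat.card β - 1)! := by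
  have hfib (H : OpenSubgroupOfIndex G (Nat.card β)) :
      Nat.card {e : G ⧸ H.1 ≃ β // e (1 : G) = b} = (Nat.card β - 1)! :=
    Nat.card_subtype_equiv_apply_eq _ b H.2.2
  have hpos (H : OpenSubgroupOfIndex G (Nat.card β)) :=
    Nat.card_pos_iff.mp (hfib H ▸ Nat.factorial_pos _)
  have : Finite (OpenSubgroupOfIndex G (Nat.card β)) :=
    Finite.of_surjective stabilizer fun H =>
      ⟨ofPointedEquiv H (hpos H).1.some, Subtype.ext (permStabilizer_ofPointedEquiv H _)⟩
  have := Fintype.ofFinite (OpenSubgroupOfIndex G (Nat.card β))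
  have (H : OpenSubgroupOfIndex G (Nat.card β)) := (hpos H).2
  rw [Nat.card_congr ((Equiv.sigmaFiberEquiv stabilizer).symm.trans
      (Equiv.sigmaCongrRight stabilizerFiberEquiv)), Nat.card_sigma,
    Finset.sum_congr rfl fun H _ => hfib H, Finset.sum_const, Finset.card_univ,
    smul_eq_mul, ← Nat.card_eq_fintype_card]

end TransOpenPermRep

variable {α : Type*} [Fintype α] [DecidableEq α]

def orbitFiberEquiv (a : α) (S : {S : Finset α // a ∈ S}) :
    {ρ : OpenPermRep G α // orbitFinset ρ.1 a = S.1} ≃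
      TransOpenPermRep G (⟨a, S.2⟩ : {x // x ∈ S.1}) × OpenPermRep G {x // x ∉ S.1} where
  toFun ρ :=
    (⟨ρ.1.restrict (· ∈ S.1) (apply_mem_iff_of_orbitFinset_eq ρ.2), fun x => by
        obtain ⟨g, hg⟩ := mem_orbitFinset.mp (by rw [ρ.2]; exact x.2)
        exact ⟨g, Subtype.ext hg⟩⟩,
      ρ.1.restrict (· ∉ S.1) fun g x => not_congr (apply_mem_iff_of_orbitFinset_eq ρ.2 g x))
  invFun ρ := ⟨OpenPermRep.subtypeCongr (· ∈ S.1) ρ.1.1 ρ.2, by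
    ext x
    simp only [mem_orbitFinset, OpenPermRep.subtypeCongr_apply_of_pos _ _ _ _ S.2]
    refine ⟨?_, fun hx => ?_⟩
    · rintro ⟨g, rfl⟩
      exact (ρ.1.1.1 g _).2
    · obtain ⟨g, hg⟩ := ρ.1.2 ⟨x, hx⟩
      exact ⟨g, congrArg Subtype.val hg⟩⟩
  left_inv ρ := by
    ext g x
    by_cases hx : x ∈ S.1
    · simp [OpenPermRep.subtypeCongr_apply_of_pos _ _ _ _ hx]
    · simp [OpenPermRep.subtypeCongr_apply_of_neg _ _ _ _ hx]
  right_inv ρ := by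
    refine Prod.ext ?_ ?_ <;> ext g x
    · simp [OpenPermRep.subtypeCongr_apply_of_pos _ _ _ _ x.2]
    · simp [OpenPermRep.subtypeCongr_apply_of_neg _ _ _ _ x.2]

noncomputable def orbitDecomposition (a : α) :
    OpenPermRep G α ≃ Σ S : {S : Finset α // a ∈ S},
      TransOpenPermRep G (⟨a, S.2⟩ : {x // x ∈ S.1}) × OpenPermRep G {x // x ∉ S.1} :=
  (Equiv.sigmaFiberEquiv fun ρ : OpenPermRep G α =>
      (⟨orbitFinset ρ.1 a, mem_orbitFinset.mpr ⟨1, by simp⟩⟩ : {S // a ∈ S})).symm.trans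
    (Equiv.sigmaCongrRight fun S =>
      (Equiv.subtypeEquivRight fun _ => Subtype.ext_iff).trans (orbitFiberEquiv a S))

lemma contHomCount_zero : contHomCount G 0 = 1 := by
  rw [contHomCount, Nat.card_eq_one_iff_unique]
  exact ⟨⟨fun ρ₁ ρ₂ => Subtype.ext (MonoidHom.ext fun _ => Subsingleton.elim _ _)⟩,
    ⟨⟨1, @continuous_const _ _ _ ⊥ _⟩⟩⟩

section Counting

open Finset

variable [IsTopologicalGroup G]

lemma card_openPermRep (β : Type*) [Fintype β] :
    Nat.card (OpenPermRep G β) = contHomCount G (Fintype.card β) := by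
  rw [contHomCount,
    Nat.card_congr (Equiv.subtypeEquivRight continuous_bot_iff_isOpen_permStabilizer),
    Nat.card_congr (OpenPermRep.congr (Fintype.equivFin β))]

lemma finite_openPermRep (hfin : ∀ n, Finite {ρ : G →* Perm (Fin n) // Continuous[_, ⊥] ρ})
    (β : Type*) [Finite β] : Finite (OpenPermRep G β) :=
  have := hfin (Nat.card β)
  .of_equiv _ ((Equiv.subtypeEquivRight continuous_bot_iff_isOpen_permStabilizer).trans
    (OpenPermRep.congr (Finite.equivFin β).symm))

lemma card_openPermRep_eq_sum (hfin : ∀ n, Finite {ρ : G →* Perm (Fin n) // Continuous[_, ⊥] ρ})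
    (a : α) :
    Nat.card (OpenPermRep G α) = ∑ S : {S : Finset α // a ∈ S},
      openSubgroupCount G S.1.card * (S.1.card - 1)! *
        contHomCount G (Fintype.card α - S.1.card) := by
  have := finite_openPermRep hfin
  rw [Nat.card_congr (orbitDecomposition a), Nat.card_sigma]
  refine sum_congr rfl fun S _ => ?_
  rw [Nat.card_prod, TransOpenPermRep.card_eq_mul_factorial, card_openPermRep,
    Fintype.card_subtype_compl, Nat.card_eq_fintype_card (α := {x // x ∈ S.1}), Fintype.card_coe]
  rfl

lemma contHomCount_succ (hfin : ∀ n, Finite {ρ : G →* Perm (Fin n) // Continuous[_, ⊥] ρ})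
    (n : ℕ) : contHomCount G (n + 1) = ∑ p ∈ antidiagonal n,
      n.choose p.1 * p.1 ! * openSubgroupCount G (p.1 + 1) * contHomCount G p.2 := by
  calc contHomCount G (n + 1) = Nat.card (OpenPermRep G (Option (Fin n))) := by
        rw [card_openPermRep, Fintype.card_option, Fintype.card_fin]
    _ = ∑ m ∈ range (n + 1),
          n.choose m * (openSubgroupCount G (m + 1) * m ! * contHomCount G (n - m)) := by
        rw [card_openPermRep_eq_sum hfin none, Fintype.card_option, Fintype.card_fin,
          sum_subtype_none_mem
            (fun k => openSubgroupCount G k * (k - 1)! * contHomCount G (n + 1 - k))]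
        simp
    _ = _ := by
        rw [Nat.sum_antidiagonal_eq_sum_range_succ_mk]
        exact sum_congr rfl fun m _ => by ring

end Counting

end PermRep

theorem wohlfahrt_identity_general (G : Type*) [Group G] [TopologicalSpace G] [IsTopologicalGroup G]
    (hfin_t : ∀ n : ℕ,
      Finite {φ : G →* Equiv.Perm (Fin n) // @Continuous G (Equiv.Perm (Fin n)) _ ⊥ ⇑φ}) :
    expComp (PowerSeries.mk fun n => (openSubgroupCount G n : ℚ) / (n : ℚ)) =
      PowerSeries.mk fun n => (contHomCount G n : ℚ) / (n.factorial : ℚ) := by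
  refine (eq_expComp_of_derivative_eq ?_ ?_ ?_).symm
  · simp [← PowerSeries.coeff_zero_eq_constantCoeff_apply] -- `M₀ / 0 = 0`
  · simp [← PowerSeries.coeff_zero_eq_constantCoeff_apply, contHomCount_zero]
  · exact derivative_mk_div_factorial_of_recurrence (contHomCount_succ hfin_t)

/-- Wohlfahrt's identity for topological groups.
`exp (∑_{H} x^[G:H] / [G:H]) = ∑_{n ≥ 0} (t_n / n!) x^n` in `ℚ[[x]]`, where `H` runs
over the open finite-index subgroups of `G` and `t_n` is the number of continuous
homomorphisms `G → S_n`.  (The coefficient `M_0/0` is `0` by convention `x/0 = 0`.) -/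
theorem wohlfahrt_identity (G : Type*) [Group G] [TopologicalSpace G] [IsTopologicalGroup G]
    (hfin_t : ∀ n : ℕ,
      Finite {φ : G →* Equiv.Perm (Fin n) // @Continuous G (Equiv.Perm (Fin n)) _ ⊥ ⇑φ})
    (hfin_M : ∀ n : ℕ, 0 < n → Finite {H : Subgroup G // IsOpen (H : Set G) ∧ H.index = n}) :
    expComp (PowerSeries.mk fun n => (openSubgroupCount G n : ℚ) / (n : ℚ)) =
      PowerSeries.mk fun n => (contHomCount G n : ℚ) / (n.factorial : ℚ) :=
  wohlfahrt_identity_general G hfin_t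
end

section
/- Let p be a prime and let K be a complete nonarchimedean normed field that is a normed ℚ_p-algebra (the norm extending the p-adic absolute value). For x ∈ K with |x| < 1, let E_p(x) := Σ_{n ≥ 0} (t_{p,n}/n!) x^n, where t_{p,n} is the number of permutations in S_n of p-power order; this series converges. Then for every real r with 0 < r < 1 and all x, y ∈ K with |x| ≤ r and |y| ≤ r, one has |E_p(x) − E_p(y) − (x − y)| ≤ r · |x − y|. -/
/-- The number of permutations in `S_n` whose order is a power of `p`. -/
noncomputable def pPowerOrderCount (p n : ℕ) : ℕ :=
  Nat.card {σ : Equiv.Perm (Fin n) // ∃ k : ℕ, orderOf σ = p ^ k}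

/-- The Artin–Hasse series `E_p(x) = ∑_{n ≥ 0} (t_{p,n}/n!) x^n` evaluated at an
element `x` of a complete nonarchimedean normed `ℚ_p`-algebra `K` (convergent for
`‖x‖ < 1` since the coefficients are `p`-integral). -/
noncomputable def artinHasse (p : ℕ) [Fact p.Prime] (K : Type*) [NormedField K]
    [NormedAlgebra ℚ_[p] K] (x : K) : K :=
  ∑' n : ℕ,
    algebraMap ℚ_[p] K ((pPowerOrderCount p n : ℚ_[p]) / (n.factorial : ℚ_[p])) * x ^ n

/-!
The coefficients `t_{p,n}/n!` are `p`-integral by Frobenius' theorem: in a finite group `G` the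
number of `p`-elements is divisible by the `p`-part of `|G|`. Writing each `g` uniquely as a
commuting product `u * s` of a `p`-element and a `p'`-element gives
`|G| = ∑_{s p'-element} #{p-elements of C_G(s)}`. Central `s` contribute `z * #{p-elements of G}`
with `z` prime to `p` (Cauchy), and a non-central `s` lies in a conjugacy class of size
`[G : C_G(s)]`, so by induction on `|G|` its class contributes a multiple of the `p`-part of `|G|`.

Given integral coefficients with `c₁ = 1`, the ultrametric inequality bounds
`E_p(x) - E_p(y) - (x - y) = ∑_{n ≥ 2} cₙ (xⁿ - yⁿ)` termwise, and
`‖xⁿ - yⁿ‖ ≤ r^(n-1) ‖x - y‖` by the geometric-sum factorisation.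
-/

open Finset Subgroup MulAction

theorem MulAction.dvd_sum_of_dvd_card_orbit_mul {M X : Type*} [Group M] [MulAction M X]
    [Fintype X] {f : X → ℕ} (hf : ∀ (g : M) (x : X), f (g • x) = f x) {m : ℕ}
    (h : ∀ x, m ∣ Nat.card (orbit M x) * f x) : m ∣ ∑ x, f x := by
  classical
  rw [← (selfEquivSigmaOrbits M X).symm.sum_comp, Fintype.sum_sigma]
  refine dvd_sum fun ω _ => ?_
  change m ∣ ∑ y : orbit M ω.out, f y
  have hconst : ∀ y : orbit M ω.out, f y = f ω.out := by
    rintro ⟨_, g, rfl⟩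
    exact hf g _
  rw [sum_congr rfl fun y _ => hconst y, sum_const, card_univ, smul_eq_mul,
    ← Nat.card_eq_fintype_card]
  exact h ω.out

def IsPElement {G : Type*} [Group G] (p : ℕ) (g : G) : Prop := ∃ k : ℕ, orderOf g = p ^ k

noncomputable def pElementCount (p : ℕ) (G : Type*) [Group G] : ℕ :=
  Nat.card {g : G // IsPElement p g}

def pPrimeCenter (p : ℕ) [hp : Fact p.Prime] (G : Type*) [Group G] : Subgroup G where
  carrier := {s | s ∈ center G ∧ ¬ p ∣ orderOf s}
  one_mem' := ⟨one_mem _, by simpa using hp.out.ne_one⟩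
  mul_mem' := by
    rintro a b ⟨ha, ha'⟩ ⟨hb, hb'⟩
    refine ⟨mul_mem ha hb, fun hdvd => ?_⟩
    have hab := Commute.orderOf_mul_dvd_mul_orderOf (mem_center_iff.mp hb a)
    rcases hp.out.dvd_mul.mp (hdvd.trans hab) with h | h
    exacts [ha' h, hb' h]
  inv_mem' := by
    rintro a ⟨ha, ha'⟩
    exact ⟨inv_mem ha, by rwa [orderOf_inv]⟩

section PElements

variable {G : Type*} [Group G] {p : ℕ}

lemma Commute.mul_pow_eq_left {u s : G} (h : Commute u s) {c : ℕ}
    (hu : c ≡ 1 [MOD orderOf u]) (hs : orderOf s ∣ c) : (u * s) ^ c = u := by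
  rw [h.mul_pow, orderOf_dvd_iff_pow_eq_one.mp hs, mul_one,
    pow_eq_pow_iff_modEq.mpr hu, pow_one]

lemma pElementCount_centralizer (s : G) :
    pElementCount p (centralizer {s}) = Nat.card {u : G // IsPElement p u ∧ Commute u s} := by
  refine Nat.card_congr (((Equiv.subtypeEquivRight fun u => ?_).trans
    (Equiv.subtypeSubtypeEquivSubtypeInter (· ∈ centralizer {s}) (IsPElement p))).trans
    (Equiv.subtypeEquivRight fun u => ?_))
  · simp only [IsPElement, orderOf_coe]
  · rw [mem_centralizer_singleton_iff, and_comm]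
    exact Iff.rfl

lemma pElementCount_centralizer_of_mem_center {s : G} (hs : s ∈ center G) :
    pElementCount p (centralizer {s}) = pElementCount p G := by
  rw [pElementCount_centralizer]
  exact Nat.card_congr (Equiv.subtypeEquivRight fun u => and_iff_left (mem_center_iff.mp hs u))

lemma pElementCount_centralizer_conjAct_smul (g : ConjAct G) (s : G) :
    pElementCount p (centralizer {g • s}) = pElementCount p (centralizer {s}) := by
  rw [pElementCount_centralizer, pElementCount_centralizer, ConjAct.smul_eq_mulAut_conj]
  refine (Nat.card_congr
    ((MulAut.conj (ConjAct.ofConjAct g)).toEquiv.subtypeEquiv fun u => ?_)).symm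
  simp only [IsPElement, MulEquiv.toEquiv_eq_coe, EquivLike.coe_coe, MulEquiv.orderOf_eq,
    commute_map_iff (MulAut.conj _).injective]

lemma ConjAct.smul_mem_center_iff (g : ConjAct G) (s : G) :
    g • s ∈ center G ↔ s ∈ center G := by
  have hfix {t : G} : t ∈ center G ↔ ∀ k : ConjAct G, k • t = t := by
    rw [← SetLike.mem_coe, ← ConjAct.fixedPoints_eq_center]
    rfl
  rw [hfix, hfix]
  exact ⟨fun h k => by rw [← inv_smul_smul g s, h g⁻¹, h k], fun h k => by rw [h g, h k]⟩

lemma ConjAct.card_orbit_eq_index_centralizer (s : G) :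
    Nat.card (orbit (ConjAct G) s) = (centralizer {s}).index := by
  rw [Nat.card_coe_set_eq, ← index_stabilizer, centralizer_eq_comap_stabilizer]
  exact (index_comap_of_surjective _ ConjAct.toConjAct.surjective).symm

lemma card_centralizer_lt [Finite G] {s : G} (hs : s ∉ center G) :
    Nat.card (centralizer {s}) < Nat.card G := by
  have hne : centralizer {s} ≠ ⊤ := by
    rwa [Ne, centralizer_eq_top_iff_subset, Set.singleton_subset_iff]
  rw [← card_mul_index (centralizer {s})]
  exact lt_mul_of_one_lt_right Nat.card_pos (one_lt_index_of_ne_top hne)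

lemma ordProj_card_dvd_sum_pElementCount_centralizer_noncenter [Fintype G] [DecidableEq G]
    (h : ∀ s ∉ center G,
      ordProj[p] (Nat.card (centralizer {s})) ∣ pElementCount p (centralizer {s})) :
    ordProj[p] (Nat.card G) ∣ ∑ s ∈ univ.filter (fun s : G => ¬ p ∣ orderOf s ∧ s ∉ center G),
      pElementCount p (centralizer {s}) := by
  rw [sum_filter]
  refine MulAction.dvd_sum_of_dvd_card_orbit_mul (M := ConjAct G) (fun g s => ?_) (fun s => ?_)
  · have hord : orderOf (g • s) = orderOf s := by
      rw [ConjAct.smul_eq_mulAut_conj, MulEquiv.orderOf_eq]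
    simp only [hord, ConjAct.smul_mem_center_iff, pElementCount_centralizer_conjAct_smul]
  · split_ifs with hs
    · rw [ConjAct.card_orbit_eq_index_centralizer, ← card_mul_index (centralizer {s}),
        Nat.ordProj_mul _ Nat.card_pos.ne' index_ne_zero_of_finite, mul_comm]
      exact mul_dvd_mul (Nat.ordProj_dvd _ _) (h s hs.2)
    · simp

variable [hp : Fact p.Prime]

lemma IsPElement.coprime_orderOf {u s : G} (hu : IsPElement p u) (hs : ¬ p ∣ orderOf s) :
    (orderOf u).Coprime (orderOf s) := by
  obtain ⟨k, hk⟩ := hu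
  rw [hk]
  exact Nat.Coprime.pow_left _ ((Nat.Prime.coprime_iff_not_dvd hp.out).mpr hs)

lemma IsOfFinOrder.exists_commute_pElement_mul {g : G} (hg : IsOfFinOrder g) :
    ∃ u s : G, IsPElement p u ∧ ¬ p ∣ orderOf s ∧ Commute u s ∧ u * s = g := by
  have hn : orderOf g ≠ 0 := hg.orderOf_pos.ne'
  set a := ordProj[p] (orderOf g)
  set m := ordCompl[p] (orderOf g)
  have hsplit : a * m = orderOf g := Nat.ordProj_mul_ordCompl_eq_self _ _
  have hcop : a.Coprime m := (Nat.coprime_ordCompl hp.out hn).pow_left _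
  obtain ⟨c, hc1, hc0⟩ := Nat.chineseRemainder hcop 1 0
  obtain ⟨d, hd0, hd1⟩ := Nat.chineseRemainder hcop 0 1
  refine ⟨g ^ c, g ^ d, ?_, fun hdvd => ?_, Commute.pow_pow_self g c d, ?_⟩
  · have : orderOf (g ^ c) ∣ a := by
      refine orderOf_dvd_of_pow_eq_one ?_
      rw [← pow_mul, ← orderOf_dvd_iff_pow_eq_one, ← hsplit, mul_comm c]
      exact mul_dvd_mul_left a (Nat.modEq_zero_iff_dvd.mp hc0)
    obtain ⟨k, -, hk⟩ := (Nat.dvd_prime_pow hp.out).mp this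
    exact ⟨k, hk⟩
  · have : orderOf (g ^ d) ∣ m := by
      refine orderOf_dvd_of_pow_eq_one ?_
      rw [← pow_mul, ← orderOf_dvd_iff_pow_eq_one, ← hsplit]
      exact mul_dvd_mul_right (Nat.modEq_zero_iff_dvd.mp hd0) m
    exact Nat.not_dvd_ordCompl hp.out hn (hdvd.trans this)
  · have : c + d ≡ 1 [MOD orderOf g] := hsplit ▸
      (Nat.modEq_and_modEq_iff_modEq_mul hcop).mp
        ⟨by simpa using hc1.add hd0, by simpa using hc0.add hd1⟩
    rw [← pow_add, _root_.pow_eq_pow_iff_modEq.mpr this, pow_one]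

lemma IsPElement.eq_of_commute_mul_eq {u s u' s' : G} (hu : IsPElement p u)
    (hs : ¬ p ∣ orderOf s) (h : Commute u s) (hu' : IsPElement p u') (hs' : ¬ p ∣ orderOf s')
    (h' : Commute u' s') (heq : u * s = u' * s') : u = u' ∧ s = s' := by
  have hcop : (orderOf u * orderOf u').Coprime (orderOf s * orderOf s') :=
    Nat.Coprime.mul_left (Nat.Coprime.mul_right (hu.coprime_orderOf hs) (hu.coprime_orderOf hs'))
      (Nat.Coprime.mul_right (hu'.coprime_orderOf hs) (hu'.coprime_orderOf hs'))
  obtain ⟨c, hc1, hc0⟩ := Nat.chineseRemainder hcop 1 0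
  have hc0 := Nat.modEq_zero_iff_dvd.mp hc0
  have huu : u = u' := by
    rw [← h.mul_pow_eq_left (Nat.ModEq.of_mul_right _ hc1) ((Dvd.intro _ rfl).trans hc0), heq,
      h'.mul_pow_eq_left (Nat.ModEq.of_mul_left _ hc1) ((Dvd.intro_left _ rfl).trans hc0)]
  exact ⟨huu, mul_left_cancel (huu ▸ heq)⟩

theorem card_eq_sum_pElementCount_centralizer [Fintype G] :
    Nat.card G = ∑ s ∈ univ.filter (fun s : G => ¬ p ∣ orderOf s),
      pElementCount p (centralizer {s}) := by
  let mul : (Σ s : {s : G // ¬ p ∣ orderOf s}, {u : G // IsPElement p u ∧ Commute u s}) → G :=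
    fun x => x.2.1 * x.1.1
  have hmul : Function.Bijective mul := by
    refine ⟨fun ⟨⟨s, hs⟩, ⟨u, hu, hus⟩⟩ ⟨⟨s', hs'⟩, ⟨u', hu', hus'⟩⟩ heq => ?_, fun g => ?_⟩
    · obtain ⟨rfl, rfl⟩ := hu.eq_of_commute_mul_eq hs hus hu' hs' hus' heq
      rfl
    · obtain ⟨u, s, hu, hs, hus, rfl⟩ :=
        (isOfFinOrder_of_finite g).exists_commute_pElement_mul (p := p)
      exact ⟨⟨⟨s, hs⟩, ⟨u, hu, hus⟩⟩, rfl⟩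
  rw [← Nat.card_congr (Equiv.ofBijective mul hmul), Nat.card_sigma]
  simp only [pElementCount_centralizer]
  exact (sum_subtype _ (fun s => by simp)
    (fun s => Nat.card {u : G // IsPElement p u ∧ Commute u s})).symm

lemma mem_pPrimeCenter {s : G} : s ∈ pPrimeCenter p G ↔ s ∈ center G ∧ ¬ p ∣ orderOf s :=
  Iff.rfl

lemma not_dvd_card_pPrimeCenter [Finite G] : ¬ p ∣ Nat.card (pPrimeCenter p G) := fun h => by
  obtain ⟨g, hg⟩ := exists_prime_orderOf_dvd_card' p h
  exact g.2.2 (by rw [orderOf_coe, hg])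

lemma sum_pElementCount_centralizer_center [Fintype G] [DecidableEq G] :
    ∑ s ∈ univ.filter (fun s : G => ¬ p ∣ orderOf s ∧ s ∈ center G),
      pElementCount p (centralizer {s}) = Nat.card (pPrimeCenter p G) * pElementCount p G := by
  classical
  rw [sum_congr rfl fun s hs => pElementCount_centralizer_of_mem_center (mem_filter.mp hs).2.2,
    sum_const, smul_eq_mul, Nat.card_eq_fintype_card, Fintype.card_subtype]
  congr 2
  ext s
  simp [mem_pPrimeCenter, and_comm]

theorem ordProj_card_dvd_pElementCount (G : Type*) [Group G] [Finite G] :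
    ordProj[p] (Nat.card G) ∣ pElementCount p G := by
  induction hN : Nat.card G using Nat.strong_induction_on generalizing G with
  | _ N ih =>
  have := Classical.decEq G
  cases nonempty_fintype G
  have hcount := card_eq_sum_pElementCount_centralizer (p := p) (G := G)
  rw [← sum_filter_add_sum_filter_not _ (· ∈ center G), filter_filter, filter_filter,
    sum_pElementCount_centralizer_center] at hcount
  have hnoncenter := ordProj_card_dvd_sum_pElementCount_centralizer_noncenter (p := p) (G := G)
    fun s hs => ih _ (hN ▸ card_centralizer_lt hs) _ rfl
  have hcop : (ordProj[p] (Nat.card G)).Coprime (Nat.card (pPrimeCenter p G)) :=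
    Nat.Coprime.pow_left _ ((Nat.Prime.coprime_iff_not_dvd hp.out).mpr not_dvd_card_pPrimeCenter)
  rw [← hN]
  refine hcop.dvd_of_dvd_mul_left ((Nat.dvd_add_left hnoncenter).mp ?_)
  rw [← hcount]
  exact Nat.ordProj_dvd _ p

end PElements

lemma Padic.norm_natCast_div_le_one {p : ℕ} [Fact p.Prime] {a b : ℕ} (hb : b ≠ 0)
    (h : ordProj[p] b ∣ a) : ‖(a / b : ℚ_[p])‖ ≤ 1 := by
  obtain ⟨w, rfl⟩ := h
  have hpow : ((ordProj[p] b : ℕ) : ℚ_[p]) ≠ 0 := by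
    exact_mod_cast (Nat.ordProj_pos b p).ne'
  have hsplit := Nat.ordProj_mul_ordCompl_eq_self b p
  set a := ordProj[p] b
  rw [← hsplit, Nat.cast_mul, Nat.cast_mul, mul_div_mul_left _ _ hpow, norm_div,
    Padic.norm_natCast_eq_one_iff.mpr (Nat.coprime_ordCompl Fact.out hb), div_one]
  exact_mod_cast Padic.norm_int_le_one (p := p) w

lemma norm_pow_succ_sub_pow_succ_le {R : Type*} [NormedCommRing R] [NormOneClass R]
    [IsUltrametricDist R] {x y : R} {r : ℝ} (hx : ‖x‖ ≤ r) (hy : ‖y‖ ≤ r) (n : ℕ) :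
    ‖x ^ (n + 1) - y ^ (n + 1)‖ ≤ r ^ n * ‖x - y‖ := by
  have hr : 0 ≤ r := (norm_nonneg x).trans hx
  rw [← geom_sum₂_mul]
  refine (norm_mul_le _ _).trans (mul_le_mul_of_nonneg_right ?_ (norm_nonneg _))
  refine IsUltrametricDist.norm_sum_le_of_forall_le_of_nonneg (by positivity) fun i hi => ?_
  have hi : i ≤ n := Nat.lt_succ_iff.mp (Finset.mem_range.mp hi)
  calc ‖x ^ i * y ^ (n + 1 - 1 - i)‖ ≤ ‖x‖ ^ i * ‖y‖ ^ (n - i) :=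
        (norm_mul_le _ _).trans (mul_le_mul (norm_pow_le _ _) (norm_pow_le _ _) (norm_nonneg _)
          (by positivity))
    _ ≤ r ^ i * r ^ (n - i) := by gcongr
    _ = r ^ n := by rw [← pow_add, Nat.add_sub_cancel' hi]

lemma summable_mul_pow_of_norm_le_one {R : Type*} [NormedRing R] [NormOneClass R]
    [CompleteSpace R] {c : ℕ → R} (hc : ∀ n, ‖c n‖ ≤ 1) {x : R} (hx : ‖x‖ < 1) :
    Summable fun n => c n * x ^ n := by
  refine .of_norm_bounded (summable_geometric_of_lt_one (norm_nonneg x) hx) fun n => ?_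
  calc ‖c n * x ^ n‖ ≤ 1 * ‖x‖ ^ n :=
        (norm_mul_le _ _).trans (mul_le_mul (hc n) (norm_pow_le _ _) (norm_nonneg _) zero_le_one)
    _ = ‖x‖ ^ n := one_mul _

theorem norm_tsum_mul_pow_sub_tsum_mul_pow_sub_le {K : Type*} [NormedCommRing K] [NormOneClass K]
    [IsUltrametricDist K] [CompleteSpace K] {c : ℕ → K} (hc : ∀ n, ‖c n‖ ≤ 1) (hc1 : c 1 = 1)
    {r : ℝ} (hr : r < 1) {x y : K} (hx : ‖x‖ ≤ r) (hy : ‖y‖ ≤ r) :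
    ‖∑' n, c n * x ^ n - ∑' n, c n * y ^ n - (x - y)‖ ≤ r * ‖x - y‖ := by
  have hr0 : 0 ≤ r := (norm_nonneg x).trans hx
  have hsx := summable_mul_pow_of_norm_le_one hc (hx.trans_lt hr)
  have hsy := summable_mul_pow_of_norm_le_one hc (hy.trans_lt hr)
  rw [← hsx.tsum_sub hsy, ← (hsx.sub hsy).sum_add_tsum_nat_add 2]
  simp only [Finset.sum_range_succ, Finset.sum_range_zero, pow_zero, pow_one, hc1, one_mul,
    sub_self, ← mul_sub, mul_zero, zero_add, add_sub_cancel_left]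
  refine IsUltrametricDist.norm_tsum_le_of_forall_le_of_nonneg (by positivity) fun n => ?_
  calc ‖c (n + 2) * (x ^ (n + 1 + 1) - y ^ (n + 1 + 1))‖ ≤ 1 * (r ^ (n + 1) * ‖x - y‖) :=
        (norm_mul_le _ _).trans (mul_le_mul (hc _) (norm_pow_succ_sub_pow_succ_le hx hy _)
          (norm_nonneg _) zero_le_one)
    _ ≤ r * ‖x - y‖ := by
        rw [one_mul]
        gcongr
        exact pow_le_of_le_one hr0 hr.le n.succ_ne_zero

lemma pPowerOrderCount_one (p : ℕ) : pPowerOrderCount p 1 = 1 :=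
  Nat.card_eq_one_iff_unique.mpr ⟨inferInstance, ⟨⟨1, 0, by simp⟩⟩⟩

lemma norm_pPowerOrderCount_div_factorial_le_one (p : ℕ) [Fact p.Prime] (n : ℕ) :
    ‖(pPowerOrderCount p n : ℚ_[p]) / (n.factorial : ℚ_[p])‖ ≤ 1 :=
  Padic.norm_natCast_div_le_one n.factorial_ne_zero <| by
    have h := ordProj_card_dvd_pElementCount (p := p) (Equiv.Perm (Fin n))
    rwa [Nat.card_perm, Nat.card_fin] at h

theorem artinHasse_sub_linear_bound_general (p : ℕ) [Fact p.Prime]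
    (K : Type*) [NormedField K] [IsUltrametricDist K] [CompleteSpace K]
    [NormedAlgebra ℚ_[p] K]
    (r : ℝ) (hr1 : r < 1)
    (x y : K) (hx : ‖x‖ ≤ r) (hy : ‖y‖ ≤ r) :
    ‖artinHasse p K x - artinHasse p K y - (x - y)‖ ≤ r * ‖x - y‖ :=
  norm_tsum_mul_pow_sub_tsum_mul_pow_sub_le
    (fun n => (norm_algebraMap' K _).trans_le (norm_pPowerOrderCount_div_factorial_le_one p n))
    (by simp [pPowerOrderCount_one]) hr1 hx hy

/-- For `0 < r < 1` and `‖x‖ ≤ r`, `‖y‖ ≤ r`,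
`‖E_p(x) - E_p(y) - (x - y)‖ ≤ r · ‖x - y‖`. -/
theorem artinHasse_sub_linear_bound (p : ℕ) [Fact p.Prime]
    (K : Type*) [NormedField K] [IsUltrametricDist K] [CompleteSpace K]
    [NormedAlgebra ℚ_[p] K]
    (r : ℝ) (hr0 : 0 < r) (hr1 : r < 1)
    (x y : K) (hx : ‖x‖ ≤ r) (hy : ‖y‖ ≤ r) :
    ‖artinHasse p K x - artinHasse p K y - (x - y)‖ ≤ r * ‖x - y‖ :=
  artinHasse_sub_linear_bound_general p K r hr1 x y hx hy
end
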